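/- arXiv:2208.08326 — 10 statements merged into one kernel-verified Lean document; each statement's English description precedes it below -/
import Mathlib

section
/- For every m ∈ ℕ with m ≥ 1, every x ≥ 0, and every bounded continuous function f : [0,∞) → ℝ, lim_{n→∞} Σ_{k=0}^{mn} C(mn,k) (x/n)^k (1 − x/n)^{mn−k} f(k/m) = Σ_{k=0}^{∞} e^{−mx} (mx)^k / k! · f(k/m), i.e., lim_{n→∞} B_{mn}^{[−1]}(f(nt); x/n) = B_m^{[0]}(f(t); x). -/
/-!
Setting `p = x / n`, the Bernstein weights of order `m n` at `x / n` are binomial probabilities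
with mean `m n p = m x`, so by the Poisson limit theorem each of them tends to the corresponding
Poisson weight `e^{-m x} (m x)^k / k!`. The bound `C(N, k) p^k (1 - p)^(N-k) ≤ (N p)^k / k!`
dominates them uniformly by a summable sequence, and since `f` is bounded, Tannery's theorem
(dominated convergence for series) lets the limit pass through the sum.
-/

open Filter Topology Finset ProbabilityTheory

lemma choose_mul_pow_mul_one_sub_pow_le {p : ℝ} (hp₀ : 0 ≤ p) (hp₁ : p ≤ 1) (n k : ℕ) :
    n.choose k * p ^ k * (1 - p) ^ (n - k) ≤ (n * p) ^ k / k.factorial :=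
  calc n.choose k * p ^ k * (1 - p) ^ (n - k)
      ≤ n.choose k * p ^ k * 1 := by
        gcongr
        exact pow_le_one₀ (by linarith) (by linarith)
    _ ≤ (n : ℝ) ^ k / k.factorial * p ^ k := by
        rw [mul_one]
        gcongr
        exact Nat.choose_le_pow_div k n
    _ = (n * p) ^ k / k.factorial := by ring

theorem tendsto_sum_choose_mul_pow_smul_of_tendsto_mul_atTop {E : Type*}
    [NormedAddCommGroup E] [NormedSpace ℝ E] [CompleteSpace E]
    {p : ℕ → ℝ} {r : ℝ} (hp : ∀ᶠ n in atTop, 0 ≤ p n)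
    (hr : Tendsto (fun n => n * p n) atTop (𝓝 r)) {g : ℕ → E} {M : ℝ} (hg : ∀ k, ‖g k‖ ≤ M) :
    Tendsto (fun n : ℕ => ∑ k ∈ range (n + 1),
        ((n.choose k : ℝ) * p n ^ k * (1 - p n) ^ (n - k)) • g k)
      atTop (𝓝 (∑' k, (Real.exp (-r) * r ^ k / k.factorial) • g k)) := by
  have hp_le_one : ∀ᶠ n in atTop, p n ≤ 1 :=
    (tendsto_zero_of_tendsto_mul_atTop hr).eventually (ge_mem_nhds zero_lt_one)
  have hmean_le : ∀ᶠ n : ℕ in atTop, (n : ℝ) * p n ≤ |r| + 1 :=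
    hr.eventually (ge_mem_nhds (by linarith [le_abs_self r]))
  have hsum_eq_tsum (n : ℕ) : ∑ k ∈ range (n + 1),
      ((n.choose k : ℝ) * p n ^ k * (1 - p n) ^ (n - k)) • g k
        = ∑' k, ((n.choose k : ℝ) * p n ^ k * (1 - p n) ^ (n - k)) • g k := by
    refine (tsum_eq_sum fun k hk => ?_).symm
    rw [Nat.choose_eq_zero_of_lt (by simpa [Nat.lt_succ_iff] using hk)]
    simp
  simp only [hsum_eq_tsum]
  refine tendsto_tsum_of_dominated_convergence
    (bound := fun k => M * ((|r| + 1) ^ k / k.factorial))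
    ((Real.summable_pow_div_factorial _).mul_left M)
    (fun k => (tendsto_choose_mul_pow_of_tendsto_mul_atTop k hr).smul_const (g k)) ?_
  filter_upwards [hp, hp_le_one, hmean_le] with n hp₀ hp₁ hmean k
  have hweight_nonneg : (0 : ℝ) ≤ n.choose k * p n ^ k * (1 - p n) ^ (n - k) := by
    have : 0 ≤ 1 - p n := by linarith
    positivity
  rw [norm_smul, Real.norm_of_nonneg hweight_nonneg, mul_comm M]
  gcongr
  · calc _ ≤ ((n : ℝ) * p n) ^ k / k.factorial :=
          choose_mul_pow_mul_one_sub_pow_le hp₀ hp₁ n k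
      _ ≤ (|r| + 1) ^ k / k.factorial := by gcongr
  · exact hg k

theorem stmt_1_general (m : ℕ) (hm : 1 ≤ m) (x : ℝ) (hx : 0 ≤ x)
    (f : ℝ → ℝ)
    (hfb : ∃ M : ℝ, ∀ t ∈ Set.Ici (0 : ℝ), |f t| ≤ M) :
    Tendsto (fun n : ℕ =>
        ∑ k ∈ Finset.range (m * n + 1),
          ((m * n).choose k : ℝ) * (x / n) ^ k * (1 - x / n) ^ (m * n - k) * f (k / m))
      atTop
      (𝓝 (∑' k : ℕ, Real.exp (-(m * x)) * (m * x) ^ k / (k.factorial : ℝ) * f (k / m))) := by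
  obtain ⟨M, hM⟩ := hfb
  have hm₀ : (m : ℝ) ≠ 0 := by exact_mod_cast (by omega : m ≠ 0)
  have hmean : Tendsto (fun N : ℕ => N * (m * x / N)) atTop (𝓝 (m * x)) :=
    tendsto_const_nhds.congr' <| by
      filter_upwards [eventually_ne_atTop 0] with N hN
      field_simp
  have hpoisson := tendsto_sum_choose_mul_pow_smul_of_tendsto_mul_atTop
    (.of_forall fun N => by positivity) hmean (g := fun k => f (k / m))
    (fun k => hM _ (Set.mem_Ici.mpr (by positivity)))
  have hmn : Tendsto (fun n : ℕ => m * n) atTop atTop :=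
    tendsto_atTop_mono (fun n => Nat.le_mul_of_pos_left n hm) tendsto_id
  refine (hpoisson.comp hmn).congr fun n => ?_
  have hscale : m * x / ((m * n : ℕ) : ℝ) = x / n := by
    push_cast
    exact mul_div_mul_left x _ hm₀
  simp only [Function.comp_apply, smul_eq_mul, hscale]

/-- **Poisson approximation to the binomial distribution, operator form.**
For `m ≥ 1`, `x ≥ 0` and every bounded continuous `f : [0,∞) → ℝ`,
`lim_{n→∞} B_{mn}^{[-1]}(f(nt); x/n) = B_m^{[0]}(f(t); x)`,
i.e. the rescaled Bernstein operators converge to the Szász–Mirakjan operator. -/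
theorem stmt_1 (m : ℕ) (hm : 1 ≤ m) (x : ℝ) (hx : 0 ≤ x)
    (f : ℝ → ℝ) (hf : ContinuousOn f (Set.Ici 0))
    (hfb : ∃ M : ℝ, ∀ t ∈ Set.Ici (0 : ℝ), |f t| ≤ M) :
    Tendsto (fun n : ℕ =>
        ∑ k ∈ Finset.range (m * n + 1),
          ((m * n).choose k : ℝ) * (x / n) ^ k * (1 - x / n) ^ (m * n - k) * f (k / m))
      atTop
      (𝓝 (∑' k : ℕ, Real.exp (-(m * x)) * (m * x) ^ k / (k.factorial : ℝ) * f (k / m))) :=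
  stmt_1_general m hm x hx f hfb
end

section
/- Let c > 0, m ∈ ℕ with m ≥ 1, and x ≥ 0. Then for every bounded continuous function f : [0,∞) → ℝ, lim_{n→∞} Σ_{j=0}^{∞} ( ∏_{l=0}^{j−1}(mn + c l) / j! ) (x/n)^j (1 + c x/n)^{−(mn/c + j)} f(j/m) = Σ_{j=0}^{∞} e^{−mx}(mx)^j/j! · f(j/m); that is, lim_{n→∞} B_{mn}^{[c]}(f(nt); x/n) = B_m^{[0]}(f(t); x). -/
/-!
Tannery's theorem (dominated convergence for series). For fixed `j`, the `j`-th term converges to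
the Poisson weight: `∏_{l<j} (mn + cl) · (x/n)^j → (mx)^j` and
`(1 + cx/n)^{-(mn/c + j)} = exp (-(mn/c + j) log (1 + cx/n)) → e^{-mx}`.
For the domination, bound the power of `1 + cx/n` by `1`; what remains is a product of the factors
`(mx + l · cx/n) / (l + 1)`, which are at most `mx + 1`, and at most `1/2` once `l ≥ 4mx` and
`n ≥ 4cx`. This gives a geometric bound in `j`, uniform in `n`.
-/

open Filter Topology Finset Real

/-- `p_{N,j}^{[c]}(t)`, with `N` allowed to be real. -/
noncomputable def baskakovBasis (N c t : ℝ) (j : ℕ) : ℝ :=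
  (∏ l ∈ range j, (N + c * l)) / (j.factorial : ℝ) * t ^ j * (1 + c * t) ^ (-(N / c + j))

theorem baskakovBasis_nonneg {N c t : ℝ} (hN : 0 ≤ N) (hc : 0 ≤ c) (ht : 0 ≤ t) (j : ℕ) :
    0 ≤ baskakovBasis N c t j := by
  unfold baskakovBasis
  positivity

theorem baskakovBasis_le_prod {N c t : ℝ} (hN : 0 ≤ N) (hc : 0 ≤ c) (ht : 0 ≤ t) (j : ℕ) :
    baskakovBasis N c t j ≤ ∏ l ∈ range j, (N + c * l) * t / (l + 1) := by
  have hfact : ∏ l ∈ range j, ((l : ℝ) + 1) = j.factorial := by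
    exact_mod_cast prod_range_add_one_eq_factorial j
  rw [prod_div_distrib, prod_mul_distrib, prod_const, card_range, hfact, baskakovBasis,
    div_mul_eq_mul_div]
  refine mul_le_of_le_one_right (by positivity) (rpow_le_one_of_one_le_of_nonpos ?_ ?_)
  · exact le_add_of_nonneg_right (mul_nonneg hc ht)
  · exact neg_nonpos.mpr (by positivity)

theorem prod_range_le_div_pow_mul_pow {u : ℕ → ℝ} {B r : ℝ} {L : ℕ} (hr : 0 < r) (hrB : r ≤ B)
    (hu0 : ∀ l, 0 ≤ u l) (huB : ∀ l, u l ≤ B) (hur : ∀ l, L ≤ l → u l ≤ r) (j : ℕ) :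
    ∏ l ∈ range j, u l ≤ (B / r) ^ L * r ^ j := by
  have hB : 0 < B := hr.trans_le hrB
  have hprod : ∀ j, ∏ l ∈ range j, u l ≤ (B / r) ^ min j L * r ^ j := by
    intro j
    induction j with
    | zero => simp
    | succ j ih =>
      rw [prod_range_succ]
      rcases lt_or_ge j L with hj | hj
      · calc (∏ l ∈ range j, u l) * u j ≤ (B / r) ^ min j L * r ^ j * B :=
              mul_le_mul ih (huB j) (hu0 j) (by positivity)
          _ = (B / r) ^ min (j + 1) L * r ^ (j + 1) := by
              rw [min_eq_left hj.le, min_eq_left hj, pow_succ, pow_succ, mul_mul_mul_comm,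
                div_mul_cancel₀ B hr.ne']
      · calc (∏ l ∈ range j, u l) * u j ≤ (B / r) ^ min j L * r ^ j * r :=
              mul_le_mul ih (hur j hj) (hu0 j) (by positivity)
          _ = (B / r) ^ min (j + 1) L * r ^ (j + 1) := by
              rw [min_eq_right hj, min_eq_right (by omega), pow_succ, mul_assoc]
  have hBr : 1 ≤ B / r := (one_le_div hr).mpr hrB
  exact (hprod j).trans
    (mul_le_mul_of_nonneg_right (pow_le_pow_right₀ hBr (min_le_right _ _)) (by positivity))

theorem baskakovBasis_rescaled_le_geometric {c m x : ℝ} (hc : 0 < c) (hm : 0 ≤ m) (hx : 0 ≤ x) :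
    ∃ K, ∀ᶠ n : ℕ in atTop, ∀ j, baskakovBasis (m * n) c (x / n) j ≤ K * (1 / 2) ^ j := by
  refine ⟨((m * x + 1) / (1 / 2)) ^ ⌈4 * (m * x)⌉₊, ?_⟩
  filter_upwards [eventually_gt_atTop 0, eventually_ge_atTop ⌈4 * (c * x)⌉₊] with n hn0 hn j
  have hn0 : (0 : ℝ) < n := by exact_mod_cast hn0
  have hd0 : 0 ≤ c * x / n := by positivity
  have hd : c * x / n ≤ 1 / 4 := by
    rw [div_le_iff₀ hn0]; linarith [Nat.ceil_le.mp hn]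
  have hmx : 0 ≤ m * x := mul_nonneg hm hx
  have hfactor : ∀ l : ℕ,
      (m * n + c * l) * (x / n) / (l + 1) = (m * x + l * (c * x / n)) / (l + 1) := by
    intro l; field_simp
  refine (baskakovBasis_le_prod (by positivity) hc.le (by positivity) j).trans
    (prod_range_le_div_pow_mul_pow (by norm_num) (by linarith) (fun l => by positivity)
      (fun l => ?_) (fun l hl => ?_) j)
  · rw [hfactor, div_le_iff₀ (by positivity)]
    have hl : (0 : ℝ) ≤ l := l.cast_nonneg
    nlinarith [mul_le_mul_of_nonneg_left hd hl]
  · have hl : 4 * (m * x) ≤ l := Nat.ceil_le.mp hl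
    rw [hfactor, div_le_iff₀ (by positivity)]
    nlinarith [mul_le_mul_of_nonneg_left hd (l.cast_nonneg : (0 : ℝ) ≤ l)]

theorem tendsto_prod_add_mul_mul_div_pow (m c x : ℝ) (j : ℕ) :
    Tendsto (fun n : ℕ => (∏ l ∈ range j, (m * n + c * l)) * (x / n) ^ j) atTop
      (𝓝 ((m * x) ^ j)) := by
  have hlim : Tendsto (fun n : ℕ => ∏ l ∈ range j, (m * x + c * l * (x / n))) atTop
      (𝓝 ((m * x) ^ j)) := by
    simpa using tendsto_finsetProd (range j) fun l _ =>
      ((tendsto_const_div_atTop_nhds_zero_nat x).const_mul (c * l)).const_add (m * x)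
  refine hlim.congr' ?_
  filter_upwards [eventually_ne_atTop 0] with n hn
  calc ∏ l ∈ range j, (m * x + c * l * (x / n))
      = ∏ l ∈ range j, ((m * n + c * l) * (x / n)) := prod_congr rfl fun l _ => by field_simp
    _ = (∏ l ∈ range j, (m * n + c * l)) * (x / n) ^ j := by
      rw [prod_mul_distrib, prod_const, card_range]

theorem tendsto_one_add_mul_div_rpow {c : ℝ} (hc : c ≠ 0) (m x a : ℝ) :
    Tendsto (fun n : ℕ => (1 + c * (x / n)) ^ (-(m * n / c + a))) atTop
      (𝓝 (exp (-(m * x)))) := by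
  have hbase : Tendsto (fun n : ℕ => 1 + c * (x / n)) atTop (𝓝 1) := by
    simpa using ((tendsto_const_div_atTop_nhds_zero_nat x).const_mul c).const_add 1
  have hlog : Tendsto (fun n : ℕ => log (1 + c * (x / n))) atTop (𝓝 0) := by
    simpa using hbase.log one_ne_zero
  have hnlog : Tendsto (fun n : ℕ => n * log (1 + c * (x / n))) atTop (𝓝 (c * x)) := by
    simpa only [Function.comp_def, mul_div_assoc] using
      (tendsto_mul_log_one_add_div_atTop (c * x)).comp tendsto_natCast_atTop_atTop
  have hexponent := (hnlog.const_mul (-(m / c))).sub (hlog.const_mul a)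
  rw [show -(m / c) * (c * x) - a * 0 = -(m * x) by rw [mul_zero, sub_zero]; field_simp]
    at hexponent
  refine ((continuous_exp.tendsto _).comp hexponent).congr' ?_
  filter_upwards [hbase.eventually (lt_mem_nhds one_pos)] with n hn
  rw [Function.comp_apply, rpow_def_of_pos hn]
  congr 1; ring

theorem tendsto_baskakovBasis_rescaled {c : ℝ} (hc : c ≠ 0) (m x : ℝ) (j : ℕ) :
    Tendsto (fun n : ℕ => baskakovBasis (m * n) c (x / n) j) atTop
      (𝓝 (exp (-(m * x)) * (m * x) ^ j / j.factorial)) := by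
  rw [mul_comm, mul_div_right_comm]
  refine (((tendsto_prod_add_mul_mul_div_pow m c x j).div_const (j.factorial : ℝ)).mul
    (tendsto_one_add_mul_div_rpow hc m x j)).congr fun n => ?_
  rw [baskakovBasis]; ring

theorem stmt_2_general (c : ℝ) (hc : 0 < c) (m : ℕ) (x : ℝ) (hx : 0 ≤ x)
    (f : ℝ → ℝ)
    (hfb : ∃ M : ℝ, ∀ t ∈ Set.Ici (0 : ℝ), |f t| ≤ M) :
    Tendsto (fun n : ℕ =>
        ∑' j : ℕ,
          ((∏ l ∈ Finset.range j, ((m * n : ℕ) + c * l)) / (j.factorial : ℝ)) *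
            (x / n) ^ j * (1 + c * (x / n)) ^ (-(((m * n : ℕ) : ℝ) / c + (j : ℝ))) * f (j / m))
      atTop
      (𝓝 (∑' j : ℕ, Real.exp (-(m * x)) * (m * x) ^ j / (j.factorial : ℝ) * f (j / m))) := by
  obtain ⟨M, hM⟩ := hfb
  have hfM : ∀ j : ℕ, |f (j / m)| ≤ M := fun j => hM _ (Set.mem_Ici.mpr (by positivity))
  have hM0 : 0 ≤ M := (abs_nonneg _).trans (hfM 0)
  obtain ⟨K, hK⟩ := baskakovBasis_rescaled_le_geometric hc (Nat.cast_nonneg m) hx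
  simp only [Nat.cast_mul]
  refine tendsto_tsum_of_dominated_convergence (bound := fun j => K * (1 / 2) ^ j * M)
    (((summable_geometric_of_lt_one (by norm_num) (by norm_num)).mul_left K).mul_right M)
    (fun j => (tendsto_baskakovBasis_rescaled hc.ne' m x j).mul_const (f (j / m))) ?_
  filter_upwards [hK] with n hn j
  have hp : 0 ≤ baskakovBasis (m * n) c (x / n) j :=
    baskakovBasis_nonneg (by positivity) hc.le (by positivity) j
  change ‖baskakovBasis (m * n) c (x / n) j * f (j / m)‖ ≤ _
  rw [norm_mul, norm_of_nonneg hp, norm_eq_abs]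
  exact (mul_le_mul_of_nonneg_left (hfM j) hp).trans (mul_le_mul_of_nonneg_right (hn j) hM0)

/-- **Convergence of rescaled Baskakov-type operators to the Szász–Mirakjan operator.**
For `c > 0`, `m ≥ 1`, `x ≥ 0` and every bounded continuous `f : [0,∞) → ℝ`,
`lim_{n→∞} B_{mn}^{[c]}(f(nt); x/n) = B_m^{[0]}(f(t); x)`. -/
theorem stmt_2 (c : ℝ) (hc : 0 < c) (m : ℕ) (hm : 1 ≤ m) (x : ℝ) (hx : 0 ≤ x)
    (f : ℝ → ℝ) (hf : ContinuousOn f (Set.Ici 0))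
    (hfb : ∃ M : ℝ, ∀ t ∈ Set.Ici (0 : ℝ), |f t| ≤ M) :
    Tendsto (fun n : ℕ =>
        ∑' j : ℕ,
          ((∏ l ∈ Finset.range j, ((m * n : ℕ) + c * l)) / (j.factorial : ℝ)) *
            (x / n) ^ j * (1 + c * (x / n)) ^ (-(((m * n : ℕ) : ℝ) / c + (j : ℝ))) * f (j / m))
      atTop
      (𝓝 (∑' j : ℕ, Real.exp (-(m * x)) * (m * x) ^ j / (j.factorial : ℝ) * f (j / m))) :=
  stmt_2_general c hc m x hx f hfb
end

section
/- Let c > 0, let n > 0 be real, x ≥ 0, and s ∈ ℝ. Then Σ_{j=0}^{∞} ( ∏_{l=0}^{j−1}(n + c l) / j! ) x^j (1 + c x)^{−(n/c + j)} e^{i s j / n} = ( 1 − c x (e^{i s / n} − 1) )^{−n/c}, where the right-hand side is the principal-branch complex power (the base 1 − cx(e^{is/n} − 1) has strictly positive real part). -/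
/-!
With `q = cx / (1 + cx) ∈ [0, 1)`, the weights factor as
`p_{n,j}^{[c]}(x) = (1 + cx)^{-n/c} · (n/c)(n/c + 1)⋯(n/c + j - 1) / j! · q^j`,
so for `|u| ≤ 1` the generating series `Σ_j p_{n,j}^{[c]}(x) u^j` is `(1 + cx)^{-n/c}` times the
binomial series of `(1 - qu)^{-n/c}`, which converges since `|qu| < 1`. Since
`(1 + cx)(1 - qu) = 1 - cx(u - 1)` and `1 + cx > 0`, the two principal powers combine.
Take `u = e^{is/n}`.
-/

open Finset Nat

theorem ascPochhammer_eval_eq_prod_range {R : Type*} [CommSemiring R] (n : ℕ) (r : R) :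
    (ascPochhammer R n).eval r = ∏ j ∈ range n, (r + j) := by
  induction n with
  | zero => simp
  | succ n ih => simp [ascPochhammer_succ_right, ih, prod_range_succ]

theorem Complex.hasSum_one_sub_cpow_neg (a : ℂ) {z : ℂ} (hz : ‖z‖ < 1) :
    HasSum (fun j ↦ (∏ l ∈ range j, (a + l)) / j ! * z ^ j) ((1 - z) ^ (-a)) := by
  have h := (one_div_one_sub_cpow_hasFPowerSeriesOnBall_zero a).hasSum
    (y := z) (by simpa [← ENNReal.coe_one, ← NNReal.coe_lt_one] using hz)
  simp only [FormalMultilinearSeries.ofScalars_apply_eq, zero_add, one_div, ← cpow_neg] at h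
  refine h.congr_fun fun j ↦ ?_
  rw [smul_eq_mul, ← Ring.multichoose_eq, ← ascPochhammer_eval_eq_prod_range,
    ← Polynomial.ascPochhammer_smeval_eq_eval, ← Ring.factorial_nsmul_multichoose_eq_ascPochhammer,
    nsmul_eq_mul, mul_div_cancel_left₀ _ (mod_cast j.factorial_ne_zero)]

theorem Complex.ofReal_mul_cpow {r : ℝ} (hr : 0 ≤ r) (w t : ℂ) :
    ((r : ℂ) * w) ^ t = (r : ℂ) ^ t * w ^ t := by
  rcases eq_or_ne t 0 with rfl | ht
  · simp
  rcases hr.eq_or_lt with rfl | hr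
  · simp [zero_cpow ht]
  rcases eq_or_ne w 0 with rfl | hw
  · simp [zero_cpow ht]
  have hr' : (r : ℂ) ≠ 0 := ofReal_ne_zero.mpr hr.ne'
  rw [cpow_def_of_ne_zero (mul_ne_zero hr' hw), log_ofReal_mul hr hw, ofReal_log hr.le, add_mul,
    exp_add, ← cpow_def_of_ne_zero hr', ← cpow_def_of_ne_zero hw]

noncomputable def baskakovWeight (c n : ℝ) (j : ℕ) (x : ℝ) : ℝ :=
  (∏ l ∈ range j, (n + c * l)) / j ! * x ^ j * (1 + c * x) ^ (-(n / c + j))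

theorem baskakovWeight_eq_mul_pow {c x : ℝ} (hc : c ≠ 0) (hb : 0 < 1 + c * x) (n : ℝ) (j : ℕ) :
    baskakovWeight c n j x = (1 + c * x) ^ (-(n / c)) *
      ((∏ l ∈ range j, (n / c + l)) / j ! * (c * x / (1 + c * x)) ^ j) := by
  have hprod : ∏ l ∈ range j, (n + c * l) = c ^ j * ∏ l ∈ range j, (n / c + l) := by
    rw [prod_congr rfl fun (l : ℕ) _ ↦ show n + c * l = c * (n / c + l) by field_simp,
      prod_mul_distrib, prod_const, card_range]
  rw [baskakovWeight, hprod, neg_add, Real.rpow_add hb, Real.rpow_neg hb.le (j : ℝ),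
    Real.rpow_natCast, div_pow, mul_pow]
  field_simp

theorem hasSum_baskakovWeight_mul_pow {c x : ℝ} (hc : 0 < c) (hx : 0 ≤ x) (n : ℝ) {u : ℂ}
    (hu : ‖u‖ ≤ 1) :
    HasSum (fun j ↦ (baskakovWeight c n j x : ℂ) * u ^ j)
      ((1 - c * x * (u - 1)) ^ (-(n / c) : ℂ)) := by
  have hb : 0 < 1 + c * x := by positivity
  set q := c * x / (1 + c * x) with hq_def
  have hq : ‖(q : ℂ) * u‖ < 1 := by
    rw [norm_mul, Complex.norm_real, Real.norm_of_nonneg (by positivity)]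
    calc q * ‖u‖ ≤ q := mul_le_of_le_one_right (by positivity) hu
      _ < 1 := (div_lt_one hb).2 (by linarith)
  have hbase : 1 - c * x * (u - 1) = ((1 + c * x : ℝ) : ℂ) * (1 - q * u) := by
    have hb' : (1 + c * x : ℂ) ≠ 0 := mod_cast hb.ne'
    push_cast [q]
    field_simp
    ring
  have hsum : (1 - c * x * (u - 1)) ^ (-(n / c) : ℂ) =
      (((1 + c * x) ^ (-(n / c)) : ℝ) : ℂ) * (1 - q * u) ^ (-((n / c : ℝ) : ℂ)) := by
    rw [hbase, Complex.ofReal_mul_cpow hb.le, Complex.ofReal_cpow hb.le]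
    push_cast
    rfl
  rw [hsum]
  refine ((Complex.hasSum_one_sub_cpow_neg _ hq).mul_left _).congr_fun fun j ↦ ?_
  rw [baskakovWeight_eq_mul_pow hc.ne' hb, ← hq_def]
  push_cast
  ring

theorem stmt_3_general (c : ℝ) (hc : 0 < c) (n : ℝ) (x : ℝ) (hx : 0 ≤ x) (s : ℝ) :
    ∑' j : ℕ,
        ((((∏ l ∈ Finset.range j, (n + c * l)) / (j.factorial : ℝ)) *
            x ^ j * (1 + c * x) ^ (-(n / c + (j : ℝ))) : ℝ) : ℂ) *
          Complex.exp (Complex.I * (s : ℂ) * (j : ℂ) / (n : ℂ)) =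
      (1 - (c : ℂ) * (x : ℂ) * (Complex.exp (Complex.I * (s : ℂ) / (n : ℂ)) - 1)) ^
        (-(n / c) : ℂ) := by
  have hE : ‖Complex.exp (Complex.I * s / n)‖ = 1 := by
    rw [Complex.norm_exp]
    simp
  refine ((hasSum_baskakovWeight_mul_pow hc hx n hE.le).congr_fun fun j ↦ ?_).tsum_eq
  rw [← Complex.exp_nat_mul, baskakovWeight]
  ring_nf

/-- **Baskakov-type operators applied to complex exponentials.**
For `c > 0`, real `n > 0`, `x ≥ 0` and `s ∈ ℝ`,
`B_n^{[c]}(e^{ist}; x) = (1 - cx(e^{is/n} - 1))^{-n/c}`,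
the right-hand side being the principal-branch complex power. -/
theorem stmt_3 (c : ℝ) (hc : 0 < c) (n : ℝ) (hn : 0 < n) (x : ℝ) (hx : 0 ≤ x) (s : ℝ) :
    ∑' j : ℕ,
        ((((∏ l ∈ Finset.range j, (n + c * l)) / (j.factorial : ℝ)) *
            x ^ j * (1 + c * x) ^ (-(n / c + (j : ℝ))) : ℝ) : ℂ) *
          Complex.exp (Complex.I * (s : ℂ) * (j : ℂ) / (n : ℂ)) =
      (1 - (c : ℂ) * (x : ℂ) * (Complex.exp (Complex.I * (s : ℂ) / (n : ℂ)) - 1)) ^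
        (-(n / c) : ℂ) :=
  stmt_3_general c hc n x hx s
end

section
/- Let m ∈ ℕ with m ≥ 1 and x ≥ 0. Then for every bounded continuous f : [0,∞) → ℝ, lim_{n→∞} (1 + x/n)^{−mn} Σ_{k=0}^{mn} C(mn,k) (x/n)^k f( nk/(mn+1) ) = Σ_{k=0}^{∞} e^{−mx}(mx)^k/k! · f(k/m); that is, lim_{n→∞} H_{mn}( f(nt/(1+t)); x/n ) = B_m^{[0]}( f(t); x ). -/
/-!
Write the summands as `w n k * f (n k / (m n + 1))` with the binomial weights
`w n k = (1 + x/n)^(-mn) C(mn, k) (x/n)^k`. For fixed `k`, `w n k → e^{-mx} (mx)^k / k!`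
(the Poisson limit of the binomial law) and the nodes tend to `k / m`, so each summand converges
to the corresponding Szász–Mirakjan summand. Since `w n k ≤ (mx)^k / k!` and `f` is bounded,
Tannery's theorem (dominated convergence for series) lets us pass to the limit in the sum.
-/

open Filter Topology Finset

lemma tendsto_one_add_div_zpow_neg_mul (m : ℕ) (x : ℝ) :
    Tendsto (fun n : ℕ => (1 + x / n) ^ (-(m * n : ℤ))) atTop (𝓝 (Real.exp (-(m * x)))) := by
  have hlim := ((Real.tendsto_one_add_div_pow_exp x).pow m).inv₀ (by positivity)
  rw [← Real.exp_nat_mul, ← Real.exp_neg] at hlim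
  refine hlim.congr fun n => ?_
  rw [← pow_mul', ← zpow_natCast, ← zpow_neg]
  push_cast
  ring_nf

lemma tendsto_choose_mul_mul_div_pow {m : ℕ} (hm : m ≠ 0) (k : ℕ) (x : ℝ) :
    Tendsto (fun n : ℕ => ((m * n).choose k : ℝ) * (x / n) ^ k) atTop
      (𝓝 ((m * x) ^ k / k.factorial)) := by
  have hp : Tendsto (fun N : ℕ => (N : ℝ) * (m * x / N)) atTop (𝓝 (m * x)) := by
    refine tendsto_const_nhds.congr' ?_
    filter_upwards [eventually_ne_atTop 0] with N hN
    field_simp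
  have hmul : Tendsto (fun n : ℕ => m * n) atTop atTop :=
    tendsto_id.const_mul_atTop' (Nat.pos_of_ne_zero hm)
  refine ((ProbabilityTheory.tendsto_choose_mul_pow_atTop k hp).comp hmul).congr fun n => ?_
  rcases eq_or_ne n 0 with rfl | hn
  · simp
  · simp only [Function.comp_apply, Nat.cast_mul]
    field_simp

lemma cast_choose_mul_pow_le (N k : ℕ) {y : ℝ} (hy : 0 ≤ y) :
    (N.choose k : ℝ) * y ^ k ≤ (N * y) ^ k / k.factorial := by
  calc (N.choose k : ℝ) * y ^ k ≤ (N : ℝ) ^ k / k.factorial * y ^ k := by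
        gcongr; exact Nat.choose_le_pow_div k N
    _ = (N * y) ^ k / k.factorial := by ring

/-- The weight of the node `n k / (m n + 1)` in `H_{mn}(f(nt/(1+t)); x/n)`. -/
noncomputable def bbhWeight (m : ℕ) (x : ℝ) (n k : ℕ) : ℝ :=
  (1 + x / n) ^ (-(m * n : ℤ)) * (((m * n).choose k : ℝ) * (x / n) ^ k)

lemma tendsto_bbhWeight {m : ℕ} (hm : m ≠ 0) (x : ℝ) (k : ℕ) :
    Tendsto (fun n => bbhWeight m x n k) atTop
      (𝓝 (Real.exp (-(m * x)) * (m * x) ^ k / k.factorial)) := by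
  rw [mul_div_assoc]
  exact (tendsto_one_add_div_zpow_neg_mul m x).mul (tendsto_choose_mul_mul_div_pow hm k x)

lemma bbhWeight_nonneg (m : ℕ) {x : ℝ} (hx : 0 ≤ x) (n k : ℕ) : 0 ≤ bbhWeight m x n k := by
  unfold bbhWeight; positivity

lemma bbhWeight_le (m : ℕ) {x : ℝ} (hx : 0 ≤ x) {n : ℕ} (hn : n ≠ 0) (k : ℕ) :
    bbhWeight m x n k ≤ (m * x) ^ k / k.factorial := by
  have hpow : (1 + x / n) ^ (-(m * n : ℤ)) ≤ 1 :=
    zpow_le_one_of_nonpos₀ (by simp; positivity) (by simp; positivity)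
  have hbinom : ((m * n).choose k : ℝ) * (x / n) ^ k ≤ (m * x) ^ k / k.factorial := by
    convert cast_choose_mul_pow_le (m * n) k (div_nonneg hx n.cast_nonneg) using 3
    push_cast
    field_simp
  calc bbhWeight m x n k ≤ 1 * ((m * x) ^ k / k.factorial) := by
        unfold bbhWeight; gcongr
    _ = _ := one_mul _

lemma tendsto_mul_div_mul_add_one {a : ℝ} (ha : a ≠ 0) (c : ℝ) :
    Tendsto (fun n : ℕ => n * c / (a * n + 1)) atTop (𝓝 (c / a)) := by
  have hden : Tendsto (fun n : ℕ => a + 1 / n) atTop (𝓝 a) := by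
    simpa using tendsto_const_nhds.add (tendsto_one_div_atTop_nhds_zero_nat (𝕜 := ℝ))
  refine ((tendsto_const_nhds (x := c)).div hden ha).congr' ?_
  filter_upwards [eventually_ne_atTop 0] with n hn
  simp only [Pi.div_apply]
  field_simp

/-- **Convergence of rescaled Bleimann–Butzer–Hahn operators to the Szász–Mirakjan
operator:** for `m ≥ 1`, `x ≥ 0` and bounded continuous `f : [0,∞) → ℝ`,
`lim_{n→∞} H_{mn}(f(nt/(1+t)); x/n) = B_m^{[0]}(f(t); x)`. -/
theorem stmt_7 (m : ℕ) (hm : 1 ≤ m) (x : ℝ) (hx : 0 ≤ x)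
    (f : ℝ → ℝ) (hf : ContinuousOn f (Set.Ici 0))
    (hfb : ∃ M : ℝ, ∀ t ∈ Set.Ici (0 : ℝ), |f t| ≤ M) :
    Tendsto (fun n : ℕ =>
        (1 + x / n) ^ (-(m * n : ℤ)) *
          ∑ k ∈ Finset.range (m * n + 1),
            ((m * n).choose k : ℝ) * (x / n) ^ k * f ((n : ℝ) * k / (m * n + 1)))
      atTop
      (𝓝 (∑' k : ℕ, Real.exp (-(m * x)) * (m * x) ^ k / (k.factorial : ℝ) * f (k / m))) := by
  obtain ⟨M, hM⟩ := hfb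
  have hm0 : m ≠ 0 := by omega
  have hnode (n k : ℕ) : (n : ℝ) * k / (m * n + 1) ∈ Set.Ici 0 := Set.mem_Ici.mpr (by positivity)
  set term : ℕ → ℕ → ℝ := fun n k => bbhWeight m x n k * f ((n : ℝ) * k / (m * n + 1))
  have hlim (k : ℕ) : Tendsto (term · k) atTop
      (𝓝 (Real.exp (-(m * x)) * (m * x) ^ k / k.factorial * f (k / m))) :=
    (tendsto_bbhWeight hm0 x k).mul <| (hf _ (Set.mem_Ici.mpr (by positivity))).tendsto.comp <|
      tendsto_nhdsWithin_iff.mpr ⟨tendsto_mul_div_mul_add_one (Nat.cast_ne_zero.mpr hm0) k, .of_forall (hnode · k)⟩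
  have hbound : ∀ᶠ n in atTop, ∀ k, ‖term n k‖ ≤ (m * x) ^ k / k.factorial * M := by
    filter_upwards [eventually_ne_atTop 0] with n hn k
    rw [Real.norm_eq_abs, abs_mul, abs_of_nonneg (bbhWeight_nonneg m hx n k)]
    exact mul_le_mul (bbhWeight_le m hx hn k) (hM _ (hnode n k)) (abs_nonneg _) (by positivity)
  have hsum : Summable fun k : ℕ => (m * x) ^ k / k.factorial * M :=
    (Real.summable_pow_div_factorial _).mul_right M
  refine (tendsto_tsum_of_dominated_convergence hsum hlim hbound).congr fun n => ?_
  rw [tsum_eq_sum (s := range (m * n + 1)), mul_sum]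
  · refine sum_congr rfl fun k _ => ?_
    simp only [term, bbhWeight, mul_assoc]
  · intro k hk
    simp [term, bbhWeight, Nat.choose_eq_zero_of_lt (by simpa using hk : m * n < k)]
end

section
/- Let m ∈ ℕ with m ≥ 1 and x ≥ 0. Then for every bounded continuous f : [0,∞) → ℝ, lim_{n→∞} (1 − x/n)^{mn+1} Σ_{k=0}^{∞} C(mn+k,k) (x/n)^k f(k/m) = Σ_{k=0}^{∞} e^{−mx}(mx)^k/k! · f(k/m) (the left-hand side being defined for all n > x); that is, lim_{n→∞} M_{mn}( f(nt/(1−t)); x/n ) = B_m^{[0]}( f(t); x ). -/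
/-!
Write `C(mn+k, k) (x/n)^k = ∏_{i<k} (mx/(i+1) + x/n)`. Each factor tends to `mx/(i+1)`, so the
`k`-th coefficient tends to `(mx)^k/k!`, while the prefactor `(1 - x/n)^(mn+1)` tends to
`e^{-mx}`. Once `x/n ≤ 1/2` the `k`-th term is dominated by `M ∏_{i<k} (mx/(i+1) + 1/2)`, where
`|f| ≤ M`; this is summable by the ratio test, so Tannery's theorem lets the limit pass under
the sum.
-/

open Filter Topology Finset

lemma cast_choose_add_mul_pow (a k : ℕ) (y : ℝ) :
    ((a + k).choose k : ℝ) * y ^ k = ∏ i ∈ range k, (a * y / (i + 1) + y) := by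
  induction k with
  | zero => simp
  | succ k ih =>
    have hchoose :
        ((a + (k + 1)).choose (k + 1) : ℝ) * (k + 1) = (a + k + 1) * (a + k).choose k := by
      exact_mod_cast (Nat.add_one_mul_choose_eq (a + k) k).symm
    rw [prod_range_succ, ← ih, pow_succ]
    field_simp
    linear_combination y ^ k * y * hchoose

lemma cast_choose_mul_div_pow (m n k : ℕ) (x : ℝ) (hn : (n : ℝ) ≠ 0) :
    ((m * n + k).choose k : ℝ) * (x / n) ^ k = ∏ i ∈ range k, (m * x / (i + 1) + x / n) := by
  rw [cast_choose_add_mul_pow]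
  refine prod_congr rfl fun i _ => ?_
  push_cast
  field_simp

lemma prod_range_div_succ (c : ℝ) (k : ℕ) :
    ∏ i ∈ range k, c / (i + 1) = c ^ k / k.factorial := by
  induction k with
  | zero => simp
  | succ k ih =>
    rw [prod_range_succ, ih, div_mul_div_comm, pow_succ, Nat.factorial_succ]
    push_cast
    ring

lemma summable_prod_range_div_succ_add (c : ℝ) {r : ℝ} (hr : |r| < 1) :
    Summable fun k => ∏ i ∈ range k, (c / (i + 1) + r) := by
  have hfactor : Tendsto (fun k : ℕ => c / ((k : ℝ) + 1) + r) atTop (𝓝 r) := by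
    simpa using (tendsto_const_div_atTop_nhds_zero_nat c).comp (tendsto_add_atTop_nat 1)
      |>.add_const r
  refine summable_of_ratio_norm_eventually_le (r := (1 + |r|) / 2) (by linarith) ?_
  filter_upwards [hfactor.norm.eventually (ge_mem_nhds (by linarith : |r| < (1 + |r|) / 2))]
    with k hk
  rw [prod_range_succ, norm_mul, mul_comm]
  exact mul_le_mul_of_nonneg_right hk (norm_nonneg _)

lemma tendsto_one_sub_div_pow_mul_add_one (m : ℕ) (x : ℝ) :
    Tendsto (fun n : ℕ => (1 - x / n) ^ (m * n + 1)) atTop (𝓝 (Real.exp (-(m * x)))) := by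
  have hfactor : Tendsto (fun n : ℕ => 1 + -x / n) atTop (𝓝 1) := by
    simpa using (tendsto_const_div_atTop_nhds_zero_nat (-x)).const_add 1
  have hlim := ((Real.tendsto_one_add_div_pow_exp (-x)).pow m).mul hfactor
  rw [mul_one, ← Real.exp_nat_mul, mul_neg] at hlim
  refine hlim.congr fun n => ?_
  rw [← pow_mul, ← pow_succ, mul_comm n m, neg_div, sub_eq_add_neg]

lemma tendsto_cast_choose_mul_div_pow (m k : ℕ) (x : ℝ) :
    Tendsto (fun n : ℕ => ((m * n + k).choose k : ℝ) * (x / n) ^ k) atTop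
      (𝓝 ((m * x) ^ k / k.factorial)) := by
  have hprod : Tendsto (fun n : ℕ => ∏ i ∈ range k, (m * x / (i + 1) + x / n)) atTop
      (𝓝 (∏ i ∈ range k, m * x / (i + 1))) :=
    tendsto_finsetProd _ fun i _ => by
      simpa using (tendsto_const_div_atTop_nhds_zero_nat x).const_add (m * x / (i + 1))
  rw [prod_range_div_succ] at hprod
  refine hprod.congr' ?_
  filter_upwards [eventually_ne_atTop 0] with n hn
  exact (cast_choose_mul_div_pow m n k x (Nat.cast_ne_zero.mpr hn)).symm

lemma norm_one_sub_div_pow_mul_choose_le (m N k : ℕ) {x : ℝ} (hx : 0 ≤ x) {n : ℕ}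
    (hn : 0 < n) (hxn : 2 * x ≤ n) :
    ‖(1 - x / n) ^ N * (((m * n + k).choose k : ℝ) * (x / n) ^ k)‖
      ≤ ∏ i ∈ range k, (m * x / (i + 1) + 1 / 2) := by
  have hn' : (0 : ℝ) < n := Nat.cast_pos.mpr hn
  have hxn0 : 0 ≤ x / n := by positivity
  have hxn1 : x / n ≤ 1 / 2 := by rw [div_le_iff₀ hn']; linarith
  have hprefactor : ‖(1 - x / n) ^ N‖ ≤ 1 := by
    rw [norm_pow]
    exact pow_le_one₀ (norm_nonneg _) (by rw [Real.norm_eq_abs, abs_le]; constructor <;> linarith)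
  rw [cast_choose_mul_div_pow m n k x hn'.ne', norm_mul]
  calc ‖(1 - x / n) ^ N‖ * ‖∏ i ∈ range k, (m * x / (i + 1) + x / n)‖
      ≤ 1 * ∏ i ∈ range k, (m * x / (i + 1) + x / n) := by
        have hprod : 0 ≤ ∏ i ∈ range k, (m * x / (i + 1) + x / n) :=
          prod_nonneg fun i _ => by positivity
        rw [Real.norm_of_nonneg hprod]
        exact mul_le_mul_of_nonneg_right hprefactor hprod
    _ ≤ ∏ i ∈ range k, (m * x / (i + 1) + 1 / 2) := by
        rw [one_mul]
        exact prod_le_prod (fun i _ => by positivity) fun i _ => by gcongr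

theorem stmt_9_general (m : ℕ) (x : ℝ) (hx : 0 ≤ x)
    (f : ℝ → ℝ)
    (hfb : ∃ M : ℝ, ∀ t ∈ Set.Ici (0 : ℝ), |f t| ≤ M) :
    Tendsto (fun n : ℕ =>
        (1 - x / n) ^ (m * n + 1) *
          ∑' k : ℕ, ((m * n + k).choose k : ℝ) * (x / n) ^ k * f (k / m))
      atTop
      (𝓝 (∑' k : ℕ, Real.exp (-(m * x)) * (m * x) ^ k / (k.factorial : ℝ) * f (k / m))) := by
  obtain ⟨M, hM⟩ := hfb
  have hfk : ∀ k : ℕ, ‖f (k / m)‖ ≤ M := fun k => hM _ (Set.mem_Ici.mpr (by positivity))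
  have hterm : ∀ k : ℕ, Tendsto (fun n : ℕ => (1 - x / n) ^ (m * n + 1) *
      (((m * n + k).choose k : ℝ) * (x / n) ^ k * f (k / m))) atTop
      (𝓝 (Real.exp (-(m * x)) * (m * x) ^ k / (k.factorial : ℝ) * f (k / m))) := fun k => by
    simpa only [mul_assoc, mul_div_assoc] using (tendsto_one_sub_div_pow_mul_add_one m x).mul
      ((tendsto_cast_choose_mul_div_pow m k x).mul_const (f (k / m)))
  have hbound : ∀ᶠ n : ℕ in atTop, ∀ k : ℕ, ‖(1 - x / n) ^ (m * n + 1) *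
      (((m * n + k).choose k : ℝ) * (x / n) ^ k * f (k / m))‖
        ≤ (∏ i ∈ range k, (m * x / (i + 1) + 1 / 2)) * M := by
    filter_upwards [eventually_gt_atTop 0,
      tendsto_natCast_atTop_atTop.eventually_ge_atTop (2 * x)] with n hn hxn k
    rw [← mul_assoc, norm_mul]
    exact mul_le_mul (norm_one_sub_div_pow_mul_choose_le m _ k hx hn hxn) (hfk k)
      (norm_nonneg _) (by positivity)
  have hsum :=
    (summable_prod_range_div_succ_add (m * x) (by norm_num : |(1 / 2 : ℝ)| < 1)).mul_right M
  simpa only [tsum_mul_left] using tendsto_tsum_of_dominated_convergence hsum hterm hbound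

/-- **Convergence of rescaled Meyer–König and Zeller operators to the Szász–Mirakjan
operator:** for `m ≥ 1`, `x ≥ 0` and bounded continuous `f : [0,∞) → ℝ`,
`lim_{n→∞} M_{mn}(f(nt/(1-t)); x/n) = B_m^{[0]}(f(t); x)`. -/
theorem stmt_9 (m : ℕ) (hm : 1 ≤ m) (x : ℝ) (hx : 0 ≤ x)
    (f : ℝ → ℝ) (hf : ContinuousOn f (Set.Ici 0))
    (hfb : ∃ M : ℝ, ∀ t ∈ Set.Ici (0 : ℝ), |f t| ≤ M) :
    Tendsto (fun n : ℕ =>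
        (1 - x / n) ^ (m * n + 1) *
          ∑' k : ℕ, ((m * n + k).choose k : ℝ) * (x / n) ^ k * f (k / m))
      atTop
      (𝓝 (∑' k : ℕ, Real.exp (-(m * x)) * (m * x) ^ k / (k.factorial : ℝ) * f (k / m))) :=
  stmt_9_general m x hx f hfb
end

section
/- Let m ∈ ℕ with m ≥ 1 and x > 0. Then for every bounded continuous f : [0,∞) → ℝ, lim_{n→∞} (1 + nx)^{−(m+1)} Σ_{k=0}^{∞} C(m+k,k) ( nx/(1+nx) )^k f( k/(mn) ) = G_{m+1}( f(t); ((m+1)/m)·x ); that is, lim_{n→∞} M_m( f( t/(n(1−t)) ); nx/(1+nx) ) = G_{m+1}( f(t); ((m+1)/m)·x ). -/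
/-!
With `c = mn` and `r = 1 + nx` the normalized series is a Riemann sum:
`r^{-(m+1)} ∑ₖ C(m+k,k) (1 - 1/r)^k f(k/c) = ∫₀^∞ Φₙ`, where `Φₙ(t)` is `c r^{-(m+1)}` times the
term with index `k = ⌊ct⌋`. Since `c/r → m/x =: L`, for fixed `t > 0` we get
`C(m+k,k)/r^m → (Lt)^m/m!` and `(1 - 1/r)^k → e^{-Lt}`, so `Φₙ(t) → L^{m+1} t^m e^{-Lt} f(t)/m!`,
while `C(m+k,k) ≤ (m+k)^m` and `1 - u ≤ e^{-u}` dominate `Φₙ` by a multiple of `(1+t)^m e^{-Lt/2}`.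
Dominated convergence and the substitution `t ↦ (m+1)t` turn the limit into `G_{m+1}`.
-/

open Filter Topology MeasureTheory Set Real

section FloorIntegral

variable {E : Type*} [NormedAddCommGroup E] [NormedSpace ℝ E] [CompleteSpace E]

lemma tsum_eq_integral_floor {g : ℕ → E}
    (hg : IntegrableOn (fun t : ℝ => g ⌊t⌋₊) (Ioi 0)) :
    ∑' k, g k = ∫ t in Ioi (0 : ℝ), g ⌊t⌋₊ := by
  have hunion : ⋃ k : ℕ, Ico (k : ℝ) (k + 1) = Ici 0 := by
    ext t
    simp only [mem_iUnion, mem_Ici]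
    refine ⟨fun ⟨k, hk⟩ => (Nat.cast_nonneg k).trans hk.1, fun ht => ⟨⌊t⌋₊, ?_⟩⟩
    exact ⟨Nat.floor_le ht, Nat.lt_floor_add_one t⟩
  have hdisj : Pairwise (Function.onFun Disjoint fun k : ℕ => Ico (k : ℝ) (k + 1)) := by
    refine fun i j hij => Set.disjoint_left.2 fun t hi hj => hij ?_
    rw [← Nat.floor_eq_on_Ico i t hi, Nat.floor_eq_on_Ico j t hj]
  rw [← integral_Ici_eq_integral_Ioi, ← hunion,
    integral_iUnion (fun _ => measurableSet_Ico) hdisj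
      (hunion ▸ (integrableOn_Ici_iff_integrableOn_Ioi).2 hg)]
  refine tsum_congr fun k => ?_
  rw [setIntegral_congr_fun measurableSet_Ico fun t ht => congrArg g (Nat.floor_eq_on_Ico k t ht),
    setIntegral_const]
  simp

lemma tsum_eq_mul_integral_floor_mul {c : ℝ} (hc : 0 < c) {g : ℕ → E}
    (hg : IntegrableOn (fun t => g ⌊c * t⌋₊) (Ioi (0 : ℝ))) :
    ∑' k, g k = c • ∫ t in Ioi 0, g ⌊c * t⌋₊ := by
  rw [integrableOn_Ioi_comp_mul_left_iff (fun t => g ⌊t⌋₊) 0 hc, mul_zero] at hg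
  rw [integral_comp_mul_left_Ioi (fun t => g ⌊t⌋₊) 0 hc, mul_zero, smul_inv_smul₀ hc.ne',
    tsum_eq_integral_floor hg]

end FloorIntegral

lemma integrableOn_add_one_pow_mul_exp_neg (m : ℕ) {μ : ℝ} (hμ : 0 < μ) :
    IntegrableOn (fun t => (t + 1) ^ m * exp (-(μ * t))) (Ioi 0) := by
  have hpow (j : ℕ) : IntegrableOn (fun t : ℝ => t ^ j * exp (-(μ * t))) (Ioi 0) := by
    simpa [Real.rpow_natCast] using integrableOn_rpow_mul_exp_neg_mul_rpow (s := j) (p := 1)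
      (neg_one_lt_zero.trans_le j.cast_nonneg) one_pos hμ
  simp_rw [add_pow, one_pow, mul_one, Finset.sum_mul]
  exact integrable_finsetSum _ fun j _ => by
    simpa only [mul_comm, mul_assoc, mul_left_comm] using (hpow j).const_mul (m.choose j : ℝ)

section Limits

variable {ι : Type*} {l : Filter ι} {r : ι → ℝ} {a : ι → ℕ} {L : ℝ}

lemma tendsto_one_sub_inv_pow_exp (hr : Tendsto r l atTop)
    (ha : Tendsto (fun i => (a i : ℝ) / r i) l (𝓝 L)) :
    Tendsto (fun i => (1 - (r i)⁻¹) ^ a i) l (𝓝 (exp (-L))) := by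
  have hlog : Tendsto (fun i => r i * log (1 + -1 / r i)) l (𝓝 (-1)) :=
    (Real.tendsto_mul_log_one_add_div_atTop (-1)).comp hr
  have hexp := (continuous_exp.tendsto _).comp (ha.mul hlog)
  rw [mul_neg_one] at hexp
  refine hexp.congr' ?_
  filter_upwards [hr.eventually_gt_atTop 1] with i hi
  have hq : 0 < 1 - (r i)⁻¹ := sub_pos.2 (inv_lt_one_of_one_lt₀ hi)
  have hri : r i ≠ 0 := by positivity
  rw [Function.comp_apply, ← mul_assoc, div_mul_cancel₀ _ hri,
    show 1 + -1 / r i = 1 - (r i)⁻¹ by ring, exp_nat_mul, exp_log hq]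

lemma tendsto_cast_choose_add_div_pow (m : ℕ) (hr : Tendsto r l atTop)
    (ha : Tendsto (fun i => (a i : ℝ) / r i) l (𝓝 L)) :
    Tendsto (fun i => ((m + a i).choose (a i) : ℝ) / r i ^ m) l (𝓝 (L ^ m / m.factorial)) := by
  have hfactor (j : ℕ) : Tendsto (fun i => ((a i + 1 + j : ℕ) : ℝ) / r i) l (𝓝 L) := by
    have := ha.add ((tendsto_const_nhds (x := ((1 + j : ℕ) : ℝ))).div_atTop hr)
    rw [add_zero] at this
    refine this.congr fun i => ?_
    push_cast
    ring
  -- `m! * C(m + a, a) = (a + 1) ⋯ (a + m)`, and each factor is asymptotic to `L r`.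
  have hprod := (tendsto_finsetProd (Finset.range m) fun j _ => hfactor j).div_const
    (m.factorial : ℝ)
  rw [Finset.prod_const, Finset.card_range] at hprod
  refine hprod.congr fun i => ?_
  rw [Finset.prod_div_distrib, Finset.prod_const, Finset.card_range, div_right_comm,
    ← Nat.cast_prod, ← Nat.ascFactorial_eq_prod_range, Nat.ascFactorial_eq_factorial_mul_choose,
    ← Nat.choose_symm_add, add_comm (a i), Nat.cast_mul, mul_div_cancel_left₀ _ (by positivity)]

end Limits

/-- `r⁻¹ ^ (m + 1) * ∑' k, mkzTerm m f c r k` is `M_m(s ↦ f (m s / (c (1 - s))); 1 - r⁻¹)`. -/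
noncomputable def mkzTerm (m : ℕ) (f : ℝ → ℝ) (c r : ℝ) (k : ℕ) : ℝ :=
  (m + k).choose k * (1 - r⁻¹) ^ k * f (k / c)

noncomputable def mkzStep (m : ℕ) (f : ℝ → ℝ) (c r t : ℝ) : ℝ :=
  c / r ^ (m + 1) * mkzTerm m f c r ⌊c * t⌋₊

lemma measurable_mkzStep (m : ℕ) (f : ℝ → ℝ) (c r : ℝ) :
    Measurable (mkzStep m f c r) :=
  ((measurable_from_nat (f := mkzTerm m f c r)).comp
    (measurable_id.const_mul c).nat_floor).const_mul _

lemma tendsto_mkzStep (m : ℕ) {f : ℝ → ℝ} {c r : ℕ → ℝ} {L t : ℝ} (hL : 0 < L)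
    (hr : Tendsto r atTop atTop) (hcr : Tendsto (fun n => c n / r n) atTop (𝓝 L))
    (hf : ContinuousAt f t) (ht : 0 < t) :
    Tendsto (fun n => mkzStep m f (c n) (r n) t) atTop
      (𝓝 (L ^ (m + 1) / m.factorial * (f t * t ^ m * exp (-(L * t))))) := by
  have hc : Tendsto c atTop atTop :=
    (hcr.pos_mul_atTop hL hr).congr' <| by
      filter_upwards [hr.eventually_gt_atTop 0] with n hn using div_mul_cancel₀ _ hn.ne'
  have hfloor : Tendsto (fun n => (⌊c n * t⌋₊ : ℝ) / c n) atTop (𝓝 t) := by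
    simpa only [mul_comm _ t, Function.comp_def] using
      (tendsto_nat_floor_mul_div_atTop ht.le).comp hc
  have hfloor_r : Tendsto (fun n => (⌊c n * t⌋₊ : ℝ) / r n) atTop (𝓝 (t * L)) :=
    (hfloor.mul hcr).congr' <| by
      filter_upwards [hc.eventually_gt_atTop 0] with n hn
      rw [div_mul_div_cancel₀ hn.ne']
  have hlim := ((hcr.mul (tendsto_cast_choose_add_div_pow m hr hfloor_r)).mul
    (tendsto_one_sub_inv_pow_exp hr hfloor_r)).mul (hf.tendsto.comp hfloor)
  convert hlim using 2 with n
  · simp only [mkzStep, mkzTerm, Function.comp_apply]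
    ring
  · rw [mul_comm t L, mul_pow]
    ring

section Bounds

variable {c r t : ℝ}

lemma one_sub_inv_pow_floor_le {μ : ℝ} (hr : 1 ≤ r) (hμ : μ * r ≤ c) (ht : 0 ≤ t) :
    (1 - r⁻¹) ^ ⌊c * t⌋₊ ≤ exp 1 * exp (-(μ * t)) := by
  have hr0 : 0 < r := one_pos.trans_le hr
  have hfloor : μ * t - 1 ≤ ⌊c * t⌋₊ / r := by
    rw [le_div_iff₀ hr0]
    nlinarith [Nat.lt_floor_add_one (c * t), mul_le_mul_of_nonneg_right hμ ht]
  calc (1 - r⁻¹) ^ ⌊c * t⌋₊ ≤ exp (-r⁻¹) ^ ⌊c * t⌋₊ :=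
        pow_le_pow_left₀ (sub_nonneg.2 (inv_le_one_of_one_le₀ hr)) (one_sub_le_exp_neg _) _
    _ = exp (-(⌊c * t⌋₊ / r)) := by rw [← exp_nat_mul, div_eq_mul_inv, mul_neg]
    _ ≤ exp (1 + -(μ * t)) := exp_le_exp.2 (by linarith)
    _ = exp 1 * exp (-(μ * t)) := exp_add _ _

lemma cast_choose_add_floor_div_pow_le (m : ℕ) {Λ : ℝ} (hr : 1 ≤ r) (hc : 0 ≤ c)
    (hΛ : c ≤ Λ * r) (ht : 0 ≤ t) :
    ((m + ⌊c * t⌋₊).choose ⌊c * t⌋₊ : ℝ) / r ^ m ≤ ((m + Λ) * (t + 1)) ^ m := by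
  have hr0 : 0 < r := one_pos.trans_le hr
  have hΛ0 : 0 ≤ Λ := nonneg_of_mul_nonneg_left (hc.trans hΛ) hr0
  have hfloor : (⌊c * t⌋₊ : ℝ) ≤ Λ * r * t :=
    (Nat.floor_le (by positivity)).trans (mul_le_mul_of_nonneg_right hΛ ht)
  calc ((m + ⌊c * t⌋₊).choose ⌊c * t⌋₊ : ℝ) / r ^ m
        ≤ ((m + ⌊c * t⌋₊ : ℕ) : ℝ) ^ m / r ^ m := by
        rw [← Nat.choose_symm_add]
        gcongr
        exact_mod_cast Nat.choose_le_pow _ _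
    _ = ((m + ⌊c * t⌋₊) / r) ^ m := by push_cast; rw [div_pow]
    _ ≤ ((m + Λ) * (t + 1)) ^ m := by
        gcongr
        rw [div_le_iff₀ hr0]
        have hm : (0 : ℝ) ≤ m := m.cast_nonneg
        nlinarith [mul_le_mul_of_nonneg_left hr hm, mul_nonneg (mul_nonneg hm ht) hr0.le,
          mul_nonneg hΛ0 hr0.le]

lemma abs_mkzStep_le (m : ℕ) {f : ℝ → ℝ} {M μ Λ : ℝ} (hf : ∀ s ∈ Ici 0, |f s| ≤ M)
    (hr : 1 ≤ r) (hμ : 0 < μ) (hμc : μ * r ≤ c) (hΛ : c ≤ Λ * r) (ht : 0 ≤ t) :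
    |mkzStep m f c r t| ≤ Λ * (m + Λ) ^ m * exp 1 * M * ((t + 1) ^ m * exp (-(μ * t))) := by
  have hr0 : 0 < r := one_pos.trans_le hr
  have hc : 0 < c := (mul_pos hμ hr0).trans_le hμc
  have hq : 0 ≤ 1 - r⁻¹ := sub_nonneg.2 (inv_le_one_of_one_le₀ hr)
  have hfk : |f (⌊c * t⌋₊ / c)| ≤ M := hf _ (mem_Ici.2 (by positivity))
  have hcr : c / r ≤ Λ := (div_le_iff₀ hr0).2 hΛ
  have hΛ0 : 0 ≤ Λ := (div_pos hc hr0).le.trans hcr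
  have hchoose := cast_choose_add_floor_div_pow_le m hr hc.le hΛ ht
  have hpow := one_sub_inv_pow_floor_le hr hμc ht
  calc |mkzStep m f c r t|
      = c / r * (((m + ⌊c * t⌋₊).choose ⌊c * t⌋₊ : ℝ) / r ^ m) * (1 - r⁻¹) ^ ⌊c * t⌋₊ *
          |f (⌊c * t⌋₊ / c)| := by
        rw [mkzStep, mkzTerm, abs_mul, abs_mul, abs_mul, abs_of_nonneg (by positivity),
          abs_of_nonneg (pow_nonneg hq _), Nat.abs_cast, pow_succ']
        ring
    _ ≤ Λ * ((m + Λ) * (t + 1)) ^ m * (exp 1 * exp (-(μ * t))) * M := by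
        gcongr
    _ = Λ * (m + Λ) ^ m * exp 1 * M * ((t + 1) ^ m * exp (-(μ * t))) := by
        rw [mul_pow]
        ring

end Bounds

lemma one_div_pow_mul_tsum_mkzTerm_eq_integral (m : ℕ) (f : ℝ → ℝ) {c r : ℝ} (hc : 0 < c)
    (hr : 0 < r) (hint : IntegrableOn (mkzStep m f c r) (Ioi 0)) :
    1 / r ^ (m + 1) * ∑' k, mkzTerm m f c r k = ∫ t in Ioi 0, mkzStep m f c r t := by
  have hK : c / r ^ (m + 1) ≠ 0 := by positivity
  have hg : IntegrableOn (fun t : ℝ => mkzTerm m f c r ⌊c * t⌋₊) (Ioi 0) := by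
    refine IntegrableOn.congr_fun (hint.const_mul (c / r ^ (m + 1))⁻¹) (fun t _ => ?_)
      measurableSet_Ioi
    rw [mkzStep, ← mul_assoc, inv_mul_cancel₀ hK, one_mul]
  simp only [mkzStep]
  rw [tsum_eq_mul_integral_floor_mul hc hg, smul_eq_mul, integral_const_mul]
  ring

theorem tendsto_one_div_pow_mul_tsum_mkzTerm (m : ℕ) {f : ℝ → ℝ}
    (hf : ContinuousOn f (Ioi 0)) {M : ℝ} (hM : ∀ t ∈ Ici 0, |f t| ≤ M) {c r : ℕ → ℝ} {L : ℝ}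
    (hL : 0 < L)
    (hr : Tendsto r atTop atTop) (hcr : Tendsto (fun n => c n / r n) atTop (𝓝 L)) :
    Tendsto (fun n => 1 / r n ^ (m + 1) * ∑' k, mkzTerm m f (c n) (r n) k) atTop
      (𝓝 (L ^ (m + 1) / m.factorial * ∫ t in Ioi 0, f t * t ^ m * exp (-(L * t)))) := by
  set bound : ℝ → ℝ := fun t => 2 * L * (m + 2 * L) ^ m * exp 1 * M *
    ((t + 1) ^ m * exp (-(L / 2 * t)))
  have hbound : IntegrableOn bound (Ioi 0) :=
    (integrableOn_add_one_pow_mul_exp_neg m (half_pos hL)).const_mul _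
  have hcomparable : ∀ᶠ n in atTop, 1 ≤ r n ∧ L / 2 * r n ≤ c n ∧ c n ≤ 2 * L * r n := by
    filter_upwards [hr.eventually_ge_atTop 1,
      hcr.eventually (Icc_mem_nhds (half_lt_self hL) (show L < 2 * L by linarith))]
      with n hr1 hcrn
    have hr0 : 0 < r n := one_pos.trans_le hr1
    exact ⟨hr1, (le_div_iff₀ hr0).1 hcrn.1, (div_le_iff₀ hr0).1 hcrn.2⟩
  have hdom : ∀ᶠ n in atTop, ∀ᵐ t ∂volume.restrict (Ioi 0),
      ‖mkzStep m f (c n) (r n) t‖ ≤ bound t := by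
    filter_upwards [hcomparable] with n ⟨hr1, hlow, hupp⟩
    refine (ae_restrict_iff' measurableSet_Ioi).2 (ae_of_all _ fun t ht => ?_)
    exact abs_mkzStep_le m hM hr1 (half_pos hL) hlow hupp (le_of_lt ht)
  have hlim := tendsto_integral_filter_of_dominated_convergence bound
    (Eventually.of_forall fun n => (measurable_mkzStep m f _ _).aestronglyMeasurable) hdom hbound
    ((ae_restrict_iff' measurableSet_Ioi).2 (ae_of_all _ fun t ht =>
      tendsto_mkzStep m hL hr hcr (hf.continuousAt (Ioi_mem_nhds ht)) ht))
  rw [integral_const_mul] at hlim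
  refine hlim.congr' ?_
  filter_upwards [hcomparable, hdom] with n ⟨hr1, hlow, _⟩ hdomn
  have hr0 : 0 < r n := one_pos.trans_le hr1
  have hc0 : 0 < c n := (mul_pos (half_pos hL) hr0).trans_le hlow
  exact (one_div_pow_mul_tsum_mkzTerm_eq_integral m f hc0 hr0
    (hbound.mono' (measurable_mkzStep m f _ _).aestronglyMeasurable hdomn)).symm

lemma zpow_neg_mul_integral_comp_div (m : ℕ) (f : ℝ → ℝ) {a y : ℝ} (ha : 0 < a) :
    y ^ (-((m : ℤ) + 1)) * ∫ t in Ioi 0, f (t / a) * t ^ m * exp (-t / y) =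
      (a / y) ^ (m + 1) * ∫ s in Ioi 0, f s * s ^ m * exp (-(a / y * s)) := by
  have hsub := integral_comp_mul_left_Ioi' (fun t => f (t / a) * t ^ m * exp (-t / y)) 0 ha
  rw [mul_zero] at hsub
  have hintegrand (s : ℝ) : f (a * s / a) * (a * s) ^ m * exp (-(a * s) / y) =
      a ^ m * (f s * s ^ m * exp (-(a / y * s))) := by
    rw [mul_div_cancel_left₀ _ ha.ne', mul_pow, neg_div, mul_div_right_comm]
    ring
  rw [← hsub, smul_eq_mul]
  simp only [hintegrand]
  rw [integral_const_mul, show -((m : ℤ) + 1) = -((m + 1 : ℕ) : ℤ) by push_cast; ring,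
    zpow_neg, zpow_natCast, div_pow, pow_succ]
  field_simp
  ring

/-- **Convergence of modified Meyer–König and Zeller operators to the Gamma operator:**
for `m ≥ 1`, `x > 0` and bounded continuous `f : [0,∞) → ℝ`,
`lim_{n→∞} M_m(f(t/(n(1-t))); nx/(1+nx)) = G_{m+1}(f(t); ((m+1)/m)x)`, where
`G_{m+1}(f; y) = (y^{-(m+1)}/m!) ∫_0^∞ f(t/(m+1)) t^m e^{-t/y} dt`. -/
theorem stmt_11 (m : ℕ) (hm : 1 ≤ m) (x : ℝ) (hx : 0 < x)
    (f : ℝ → ℝ) (hf : ContinuousOn f (Set.Ici 0))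
    (hfb : ∃ M : ℝ, ∀ t ∈ Set.Ici (0 : ℝ), |f t| ≤ M) :
    Tendsto (fun n : ℕ =>
        (1 / (1 + n * x) ^ (m + 1)) *
          ∑' k : ℕ, ((m + k).choose k : ℝ) * (n * x / (1 + n * x)) ^ k * f (k / (m * n)))
      atTop
      (𝓝 ((((m : ℝ) + 1) / m * x) ^ (-((m : ℤ) + 1)) / (m.factorial : ℝ) *
        ∫ t in Set.Ioi (0 : ℝ),
          f (t / (m + 1)) * t ^ m * Real.exp (-t / (((m : ℝ) + 1) / m * x)))) := by
  obtain ⟨M, hM⟩ := hfb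
  have hm0 : (0 : ℝ) < m := by exact_mod_cast hm
  have hr : Tendsto (fun n : ℕ => 1 + n * x) atTop atTop :=
    tendsto_atTop_add_const_left _ 1 (tendsto_natCast_atTop_atTop.atTop_mul_const hx)
  have hcr : Tendsto (fun n : ℕ => m * n / (1 + n * x)) atTop (𝓝 (m / x)) := by
    have hden : Tendsto (fun n : ℕ => (n : ℝ)⁻¹ + x) atTop (𝓝 x) := by
      simpa using (tendsto_inv_atTop_zero.comp tendsto_natCast_atTop_atTop).add_const x
    refine (tendsto_const_nhds.div hden hx.ne').congr' ?_
    filter_upwards [eventually_ne_atTop 0] with n hn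
    have hn' : (n : ℝ) ≠ 0 := by exact_mod_cast hn
    simp only [Pi.div_apply]
    field_simp
  have hlim := tendsto_one_div_pow_mul_tsum_mkzTerm m (hf.mono Ioi_subset_Ici_self) hM
    (div_pos hm0 hx) hr hcr
  have hrate : ((m : ℝ) + 1) / (((m : ℝ) + 1) / m * x) = m / x := by field_simp
  rw [div_mul_eq_mul_div, zpow_neg_mul_integral_comp_div m f (by positivity),
    hrate, mul_div_right_comm]
  refine hlim.congr fun n => ?_
  have hq : (1 : ℝ) - (1 + n * x)⁻¹ = n * x / (1 + n * x) := by field_simp; ring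
  simp only [mkzTerm, hq]
end

section
/- Let λ : [0,1] → [0,1] be continuous with λ(0) = 1, let m ∈ ℕ with m ≥ 1 and x ≥ 0. Then for every bounded continuous f : [0,∞) → ℝ, lim_{n→∞} Σ_{r=0}^{mn} C(mn,r) λ(x/n)^r (1 − λ(x/n))^{mn−r} Σ_{k=0}^{r} C(r,k) (x/n)^k (1 − x/n)^{r−k} f( k/m + (1 − r/(mn)) x ) = Σ_{j=0}^{∞} e^{−mx}(mx)^j/j! · f(j/m) (the left-hand side being defined for all n ≥ x); that is, lim_{n→∞} A_{mn,λ}( f(nt); x/n ) = B_m^{[0]}( f(t); x ). -/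
/-!
Let `N = m n`. In the double sum, `r` is binomial `Bin(N, λ(x/n))` and, given `r`, `k` is
`Bin(r, x/n)`; a binomial thinning of a binomial is binomial, so `k ~ Bin(N, λ(x/n) · x/n)`.
Since `N · λ(x/n) · x/n = m x λ(x/n) → m x`, the Poisson limit theorem, made uniform by the bound
`C(N, k) q^k ≤ (N q)^k / k!` and Tannery's theorem, turns the sum with `f (k/m)` in place of
`f (k/m + (1 - r/N) x)` into the Szász–Mirakjan value. The shift `(1 - r/N) x` costs nothing in the
limit: `f` is uniformly continuous on compacts, and the mass where `1 - r/N` or `k` is large is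
controlled by Markov's inequality through `E[1 - r/N] = 1 - λ(x/n) → 0` and `E[k] ≤ m x`.
-/

open Filter Topology Finset

def binomialWeight (N : ℕ) (p : ℝ) (k : ℕ) : ℝ := N.choose k * p ^ k * (1 - p) ^ (N - k)

namespace binomialWeight

theorem nonneg {N : ℕ} {p : ℝ} (hp₀ : 0 ≤ p) (hp₁ : p ≤ 1) (k : ℕ) : 0 ≤ binomialWeight N p k := by
  unfold binomialWeight
  have : 0 ≤ 1 - p := by linarith
  positivity

theorem of_lt {N k : ℕ} (h : N < k) (p : ℝ) : binomialWeight N p k = 0 := by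
  simp [binomialWeight, Nat.choose_eq_zero_of_lt h]

theorem eq_eval_bernsteinPolynomial (N : ℕ) (p : ℝ) (k : ℕ) :
    binomialWeight N p k = (bernsteinPolynomial ℝ N k).eval p := by
  simp [binomialWeight, bernsteinPolynomial]

theorem sum (N : ℕ) (p : ℝ) : ∑ k ∈ range (N + 1), binomialWeight N p k = 1 := by
  simpa [eq_eval_bernsteinPolynomial, Polynomial.eval_finsetSum] using
    congrArg (Polynomial.eval p) (bernsteinPolynomial.sum ℝ N)

theorem sum_natCast_mul (N : ℕ) (p : ℝ) :
    ∑ k ∈ range (N + 1), (k : ℝ) * binomialWeight N p k = N * p := by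
  simpa [eq_eval_bernsteinPolynomial, Polynomial.eval_finsetSum] using
    congrArg (Polynomial.eval p) (bernsteinPolynomial.sum_smul ℝ N)

theorem sum_mul_binomialWeight (N k : ℕ) (u p : ℝ) :
    ∑ r ∈ range (N + 1), binomialWeight N u r * binomialWeight r p k =
      binomialWeight N (u * p) k := by
  rcases lt_or_ge N k with hNk | hkN
  · rw [of_lt hNk]
    exact Finset.sum_eq_zero fun r hr =>
      by rw [of_lt (N := r) (k := k) (by grind), mul_zero]
  rw [← Finset.sum_range_add_sum_Ico _ (by omega : k ≤ N + 1),
    Finset.sum_eq_zero fun r hr => by rw [of_lt (Finset.mem_range.1 hr), mul_zero],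
    zero_add, Finset.sum_Ico_eq_sum_range, show N + 1 - k = N - k + 1 by omega]
  have hterm (j : ℕ) : binomialWeight N u (k + j) * binomialWeight (k + j) p k =
      N.choose k * (u * p) ^ k *
        ((u * (1 - p)) ^ j * (1 - u) ^ (N - k - j) * (N - k).choose j) := by
    have hchoose : (N.choose (k + j) : ℝ) * (k + j).choose k = N.choose k * (N - k).choose j := by
      exact_mod_cast (Nat.choose_mul (Nat.le_add_right k j)).trans (by rw [Nat.add_sub_cancel_left])
    simp only [binomialWeight, Nat.add_sub_cancel_left, Nat.sub_add_eq, mul_pow]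
    linear_combination (u ^ k * u ^ j * p ^ k * (1 - p) ^ j * (1 - u) ^ (N - k - j)) * hchoose
  rw [Finset.sum_congr rfl fun j _ => hterm j, ← Finset.mul_sum, ← add_pow, binomialWeight,
    show u * (1 - p) + (1 - u) = 1 - u * p by ring]

theorem sum_mul_sum (N : ℕ) (u p : ℝ) (g : ℕ → ℝ) :
    ∑ r ∈ range (N + 1), binomialWeight N u r * ∑ k ∈ range (r + 1), binomialWeight r p k * g k =
      ∑ k ∈ range (N + 1), binomialWeight N (u * p) k * g k := by
  have hinner : ∀ r ∈ range (N + 1), ∑ k ∈ range (r + 1), binomialWeight r p k * g k =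
      ∑ k ∈ range (N + 1), binomialWeight r p k * g k := fun r hr =>
    Finset.sum_subset (Finset.range_subset_range.2 (by grind)) fun k _ hk => by
      rw [of_lt (by simpa using hk), zero_mul]
  rw [Finset.sum_congr rfl fun r hr => by rw [hinner r hr, Finset.mul_sum], Finset.sum_comm]
  refine Finset.sum_congr rfl fun k _ => ?_
  simp_rw [← mul_assoc, ← Finset.sum_mul, sum_mul_binomialWeight]

theorem sum_mul_add_mul (N : ℕ) (p a b : ℝ) :
    ∑ k ∈ range (N + 1), binomialWeight N p k * (a + b * k) = a + b * (N * p) := by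
  calc ∑ k ∈ range (N + 1), binomialWeight N p k * (a + b * k)
      = a * ∑ k ∈ range (N + 1), binomialWeight N p k
        + b * ∑ k ∈ range (N + 1), (k : ℝ) * binomialWeight N p k := by
        rw [Finset.mul_sum, Finset.mul_sum, ← Finset.sum_add_distrib]
        exact Finset.sum_congr rfl fun k _ => by ring
    _ = a + b * (N * p) := by rw [sum, sum_natCast_mul, mul_one]

theorem abs_sum_mul_sum_le {N : ℕ} (hN : N ≠ 0) {u p : ℝ} (hu₀ : 0 ≤ u) (hu₁ : u ≤ 1)
    (hp₀ : 0 ≤ p) (hp₁ : p ≤ 1) {F : ℕ → ℕ → ℝ} {a b c : ℝ}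
    (hF : ∀ r ≤ N, ∀ k ≤ r, |F r k| ≤ a + b * (1 - r / N) + c * k) :
    |∑ r ∈ range (N + 1), binomialWeight N u r * ∑ k ∈ range (r + 1), binomialWeight r p k * F r k|
      ≤ a + b * (1 - u) + c * (N * u * p) := by
  have hN' : (N : ℝ) ≠ 0 := Nat.cast_ne_zero.2 hN
  calc _ ≤ ∑ r ∈ range (N + 1), binomialWeight N u r *
        ∑ k ∈ range (r + 1), binomialWeight r p k * (a + b * (1 - r / N) + c * k) := by
        refine (Finset.abs_sum_le_sum_abs _ _).trans (Finset.sum_le_sum fun r hr => ?_)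
        rw [abs_mul, abs_of_nonneg (nonneg hu₀ hu₁ r)]
        refine mul_le_mul_of_nonneg_left ((Finset.abs_sum_le_sum_abs _ _).trans
          (Finset.sum_le_sum fun k hk => ?_)) (nonneg hu₀ hu₁ r)
        rw [abs_mul, abs_of_nonneg (nonneg hp₀ hp₁ k)]
        exact mul_le_mul_of_nonneg_left (hF r (by simpa [Nat.lt_succ_iff] using hr) k
          (by simpa [Nat.lt_succ_iff] using hk)) (nonneg hp₀ hp₁ k)
    _ = ∑ r ∈ range (N + 1), binomialWeight N u r * ((a + b) + (c * p - b / N) * r) := by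
        refine Finset.sum_congr rfl fun r _ => ?_
        rw [sum_mul_add_mul]
        ring
    _ = a + b * (1 - u) + c * (N * u * p) := by
        rw [sum_mul_add_mul]
        field_simp
        ring

end binomialWeight

theorem tendsto_sum_binomialWeight_mul {p : ℕ → ℝ} {μ : ℝ}
    (hμ : Tendsto (fun n : ℕ => n * p n) atTop (𝓝 μ)) (hp : ∀ᶠ n in atTop, 0 ≤ p n)
    {g : ℕ → ℝ} {M : ℝ} (hg : ∀ k, |g k| ≤ M) :
    Tendsto (fun n => ∑ k ∈ range (n + 1), binomialWeight n (p n) k * g k) atTop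
      (𝓝 (∑' k, Real.exp (-μ) * μ ^ k / k.factorial * g k)) := by
  have hsum : ∀ n, ∑ k ∈ range (n + 1), binomialWeight n (p n) k * g k =
      ∑' k, binomialWeight n (p n) k * g k := fun n =>
    (tsum_eq_sum fun k hk => by rw [binomialWeight.of_lt (by simpa using hk), zero_mul]).symm
  simp_rw [hsum]
  refine tendsto_tsum_of_dominated_convergence (bound := fun k => (μ + 1) ^ k / k.factorial * M)
    ((Real.summable_pow_div_factorial (μ + 1)).mul_right M)
    (fun k => (ProbabilityTheory.tendsto_choose_mul_pow_of_tendsto_mul_atTop k hμ).mul_const _) ?_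
  have hp₁ : ∀ᶠ n in atTop, p n ≤ 1 :=
    (ProbabilityTheory.tendsto_zero_of_tendsto_mul_atTop hμ).eventually_le_const zero_lt_one
  filter_upwards [hp, hp₁, hμ.eventually_le_const (lt_add_one μ)] with n hp₀ hp₁ hnp k
  have hchoose : (n.choose k : ℝ) * p n ^ k ≤ (μ + 1) ^ k / k.factorial :=
    calc (n.choose k : ℝ) * p n ^ k ≤ n ^ k / k.factorial * p n ^ k := by
          gcongr; exact Nat.choose_le_pow_div k n
      _ = (n * p n) ^ k / k.factorial := by ring
      _ ≤ (μ + 1) ^ k / k.factorial := by gcongr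
  have hweight : binomialWeight n (p n) k ≤ (μ + 1) ^ k / k.factorial :=
    (mul_le_of_le_one_right (by positivity) (pow_le_one₀ (by linarith) (by linarith))).trans hchoose
  rw [Real.norm_eq_abs, abs_mul, abs_of_nonneg (binomialWeight.nonneg hp₀ hp₁ k)]
  exact mul_le_mul hweight (hg k) (abs_nonneg _)
    ((binomialWeight.nonneg hp₀ hp₁ k).trans hweight)

theorem eventually_div_natCast_mem_Icc {c : ℝ} (hc : 0 ≤ c) :
    ∀ᶠ N : ℕ in atTop, c / N ∈ Set.Icc 0 1 := by
  filter_upwards [eventually_ge_atTop ⌈c⌉₊] with N hN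
  exact ⟨by positivity, div_le_one_of_le₀ ((Nat.le_ceil c).trans (by exact_mod_cast hN))
    (Nat.cast_nonneg N)⟩

theorem exists_pos_forall_abs_sub_le {f : ℝ → ℝ} (hf : ContinuousOn f (Set.Ici 0)) (ρ : ℝ)
    {ε : ℝ} (hε : 0 < ε) :
    ∃ δ > 0, ∀ y ∈ Set.Icc 0 ρ, ∀ s ∈ Set.Icc 0 δ, |f (y + s) - f y| ≤ ε := by
  have hfu : UniformContinuousOn f (Set.Icc 0 (ρ + 1)) :=
    isCompact_Icc.uniformContinuousOn_of_continuous (hf.mono fun t ht => ht.1)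
  obtain ⟨δ, hδ, hfδ⟩ := Metric.uniformContinuousOn_iff.1 hfu ε hε
  refine ⟨min (δ / 2) 1, by positivity, fun y hy s hs => ?_⟩
  have hs₁ := hs.2.trans (min_le_right _ _)
  have hs₂ := hs.2.trans (min_le_left _ _)
  have hdist : dist (y + s) y < δ := by
    rw [Real.dist_eq, add_sub_cancel_left, abs_of_nonneg hs.1]
    linarith
  exact (hfδ (y + s) ⟨by linarith [hy.1, hs.1], by linarith [hy.2]⟩ y
    ⟨hy.1, by linarith [hy.2]⟩ hdist).le

/-- Markov's inequality in pointwise form: off the region where `f` is `ε`-close, one of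
`s / δ`, `y / ρ` is at least `1`. -/
theorem abs_sub_le_of_forall_abs_sub_le {f : ℝ → ℝ} {M ε δ ρ : ℝ}
    (hM : ∀ t ∈ Set.Ici (0 : ℝ), |f t| ≤ M) (hδ : 0 < δ) (hρ : 0 < ρ)
    (hnear : ∀ y ∈ Set.Icc 0 ρ, ∀ s ∈ Set.Icc 0 δ, |f (y + s) - f y| ≤ ε)
    {y s : ℝ} (hy : 0 ≤ y) (hs : 0 ≤ s) :
    |f (y + s) - f y| ≤ ε + 2 * M * (s / δ + y / ρ) := by
  have hε : 0 ≤ ε := by simpa using hnear 0 ⟨le_rfl, hρ.le⟩ 0 ⟨le_rfl, hδ.le⟩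
  have hM₀ : 0 ≤ M := (abs_nonneg _).trans (hM 0 Set.self_mem_Ici)
  by_cases hclose : y ≤ ρ ∧ s ≤ δ
  · have : 0 ≤ 2 * M * (s / δ + y / ρ) := by positivity
    linarith [hnear y ⟨hy, hclose.1⟩ s ⟨hs, hclose.2⟩]
  · have hfar : 1 ≤ s / δ + y / ρ := by
      rcases not_and_or.1 hclose with h | h
      · linarith [(one_le_div hρ).2 (not_le.1 h).le, div_nonneg hs hδ.le]
      · linarith [(one_le_div hδ).2 (not_le.1 h).le, div_nonneg hy hρ.le]
    calc |f (y + s) - f y| ≤ |f (y + s)| + |f y| := abs_sub _ _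
      _ ≤ 2 * M * 1 := by linarith [hM (y + s) (Set.mem_Ici.2 (by positivity)), hM y hy]
      _ ≤ ε + 2 * M * (s / δ + y / ρ) := by nlinarith

theorem tendsto_sum_binomialWeight_shift_sub {f : ℝ → ℝ} (hf : ContinuousOn f (Set.Ici 0)) {M : ℝ}
    (hM : ∀ t ∈ Set.Ici (0 : ℝ), |f t| ≤ M) {m : ℕ} (hm : m ≠ 0) {x : ℝ} (hx : 0 ≤ x)
    {u : ℕ → ℝ} (hu : ∀ᶠ N in atTop, u N ∈ Set.Icc 0 1) (hu₁ : Tendsto u atTop (𝓝 1)) :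
    Tendsto (fun N : ℕ => ∑ r ∈ range (N + 1), binomialWeight N (u N) r *
        ∑ k ∈ range (r + 1), binomialWeight r (m * x / N) k *
          (f (k / m + (1 - r / N) * x) - f (k / m))) atTop (𝓝 0) := by
  rw [NormedAddGroup.tendsto_nhds_zero]
  intro ε hε
  have hM₀ : 0 ≤ M := (abs_nonneg _).trans (hM 0 Set.self_mem_Ici)
  obtain ⟨ρ, hρ, hρε⟩ : ∃ ρ > 0, 2 * M * x / ρ < ε / 3 := by
    refine ⟨6 * M * x / ε + 1, by positivity, ?_⟩
    rw [div_lt_iff₀ (by positivity)]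
    field_simp
    linarith
  obtain ⟨δ, hδ, hnear⟩ := exists_pos_forall_abs_sub_le hf ρ (by positivity : 0 < ε / 3)
  have hsmall : ∀ᶠ N in atTop, 2 * M * x / δ * (1 - u N) < ε / 3 := by
    have : Tendsto (fun N => 2 * M * x / δ * (1 - u N)) atTop (𝓝 0) := by
      simpa using ((tendsto_const_nhds (x := (1 : ℝ))).sub hu₁).const_mul (2 * M * x / δ)
    exact this.eventually (gt_mem_nhds (by positivity))
  filter_upwards [hu, hsmall, eventually_div_natCast_mem_Icc (by positivity : 0 ≤ m * x),
    eventually_ne_atTop 0] with N huN hsmallN hp hN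
  have hbound := binomialWeight.abs_sum_mul_sum_le hN huN.1 huN.2 hp.1 hp.2
    (F := fun r k => f (k / m + (1 - r / N) * x) - f (k / m))
    (a := ε / 3) (b := 2 * M * x / δ) (c := 2 * M / (m * ρ)) fun r hr k hk => by
      have hθ : 0 ≤ 1 - (r : ℝ) / N :=
        sub_nonneg.2 (div_le_one_of_le₀ (by exact_mod_cast hr) (Nat.cast_nonneg N))
      refine (abs_sub_le_of_forall_abs_sub_le hM hδ hρ hnear (y := k / m) (by positivity)
        (mul_nonneg hθ hx)).trans_eq ?_
      ring
  have hlast : 2 * M / (m * ρ) * (N * u N * (m * x / N)) ≤ 2 * M * x / ρ := by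
    have hm' : (m : ℝ) ≠ 0 := Nat.cast_ne_zero.2 hm
    have hN' : (N : ℝ) ≠ 0 := Nat.cast_ne_zero.2 hN
    calc 2 * M / (m * ρ) * (N * u N * (m * x / N)) = 2 * M * x / ρ * u N := by
          field_simp
      _ ≤ 2 * M * x / ρ := mul_le_of_le_one_right (by positivity) huN.2
  rw [Real.norm_eq_abs]
  linarith

/-- **Convergence of rescaled Lototsky–Schnabl operators to the Szász–Mirakjan operator:**
for continuous `lam : [0,1] → [0,1]` with `lam 0 = 1`, `m ≥ 1`, `x ≥ 0` and bounded
continuous `f : [0,∞) → ℝ`, `lim_{n→∞} A_{mn,lam}(f(nt); x/n) = B_m^{[0]}(f(t); x)`. -/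
theorem stmt_12 (lam : ℝ → ℝ) (hlamc : ContinuousOn lam (Set.Icc 0 1))
    (hlam01 : ∀ t ∈ Set.Icc (0 : ℝ) 1, lam t ∈ Set.Icc (0 : ℝ) 1) (hlam0 : lam 0 = 1)
    (m : ℕ) (hm : 1 ≤ m) (x : ℝ) (hx : 0 ≤ x)
    (f : ℝ → ℝ) (hf : ContinuousOn f (Set.Ici 0))
    (hfb : ∃ M : ℝ, ∀ t ∈ Set.Ici (0 : ℝ), |f t| ≤ M) :
    Tendsto (fun n : ℕ =>
        ∑ r ∈ Finset.range (m * n + 1),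
          ((m * n).choose r : ℝ) * lam (x / n) ^ r * (1 - lam (x / n)) ^ (m * n - r) *
            ∑ k ∈ Finset.range (r + 1),
              (r.choose k : ℝ) * (x / n) ^ k * (1 - x / n) ^ (r - k) *
                f (k / m + (1 - (r : ℝ) / (m * n)) * x))
      atTop
      (𝓝 (∑' j : ℕ, Real.exp (-(m * x)) * (m * x) ^ j / (j.factorial : ℝ) * f (j / m))) := by
  obtain ⟨M, hM⟩ := hfb
  have hm₀ : m ≠ 0 := by omega
  have hp := eventually_div_natCast_mem_Icc (by positivity : (0 : ℝ) ≤ m * x)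
  have hu : ∀ᶠ N : ℕ in atTop, lam (m * x / N) ∈ Set.Icc 0 1 := hp.mono fun N hN => hlam01 _ hN
  have hu₁ : Tendsto (fun N : ℕ => lam (m * x / N)) atTop (𝓝 1) := by
    have hp₀ : Tendsto (fun N : ℕ => m * x / (N : ℝ)) atTop (𝓝[Set.Icc 0 1] 0) :=
      tendsto_nhdsWithin_iff.2 ⟨tendsto_const_div_atTop_nhds_zero_nat _, hp⟩
    rw [← hlam0]
    exact (hlamc 0 ⟨le_rfl, zero_le_one⟩).tendsto.comp hp₀
  have hmean : Tendsto (fun N : ℕ => N * (lam (m * x / N) * (m * x / N))) atTop (𝓝 (m * x)) := by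
    refine (by simpa using hu₁.const_mul (m * x) : Tendsto _ _ (𝓝 (m * x))).congr' ?_
    filter_upwards [eventually_ne_atTop 0] with N hN
    field_simp
  have hpoisson := tendsto_sum_binomialWeight_mul hmean
    (hu.and hp |>.mono fun N h => mul_nonneg h.1.1 h.2.1) (g := fun k => f (k / m))
    fun k => hM _ (Set.mem_Ici.2 (by positivity))
  have hshift := tendsto_sum_binomialWeight_shift_sub hf hM hm₀ hx hu hu₁
  have hN : Tendsto (fun n : ℕ => m * n) atTop atTop := tendsto_id.nsmul_atTop hm
  have hG := (hpoisson.add hshift).comp hN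
  rw [add_zero] at hG
  refine hG.congr fun n => ?_
  rw [Function.comp_apply, ← binomialWeight.sum_mul_sum, ← Finset.sum_add_distrib]
  refine Finset.sum_congr rfl fun r _ => ?_
  rw [← mul_add, ← Finset.sum_add_distrib]
  have hm' : (m : ℝ) ≠ 0 := Nat.cast_ne_zero.2 hm₀
  simp only [binomialWeight, Nat.cast_mul, mul_div_mul_left x _ hm', ← mul_add, add_sub_cancel]
end

section
/- Let (L_n)_{n≥1} and (T_m)_{m≥1} be families of maps sending bounded continuous functions f : [0,∞) → ℝ to real-valued functions on [0,∞). Suppose that for every m ≥ 1, every x ≥ 0, and every bounded continuous f : [0,∞) → ℝ, lim_{n→∞} L_{mn}( t ↦ f(nt) )(x/n) = T_m(f)(x). Then for all m ≥ 1, ν ≥ 1 (m, ν ∈ ℕ), x ≥ 0, and bounded continuous f : [0,∞) → ℝ, T_{mν}( t ↦ f(νt) )(x/ν) = T_m(f)(x). -/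
open Filter Topology Set

lemma ContinuousOn.comp_const_mul_Ici {f : ℝ → ℝ} (hf : ContinuousOn f (Ici 0)) {c : ℝ}
    (hc : 0 ≤ c) : ContinuousOn (fun t => f (c * t)) (Ici 0) :=
  hf.comp (continuous_const_mul c).continuousOn fun _ ht => mul_nonneg hc ht

lemma exists_abs_comp_const_mul_le_of_Ici {f : ℝ → ℝ} {c : ℝ} (hc : 0 ≤ c)
    (hb : ∃ M : ℝ, ∀ t ∈ Ici (0 : ℝ), |f t| ≤ M) :
    ∃ M : ℝ, ∀ t ∈ Ici (0 : ℝ), |f (c * t)| ≤ M :=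
  let ⟨M, hM⟩ := hb
  ⟨M, fun _ ht => hM _ (mul_nonneg hc ht)⟩

/-- **Functional equation for limit operators.** If
`lim_{n→∞} L_{mn}(f(nt); x/n) = T_m(f(t); x)` for all `m ≥ 1`, `x ≥ 0` and bounded
continuous `f : [0,∞) → ℝ`, then `T_{mν}(f(νt); x/ν) = T_m(f(t); x)` for all
`m, ν ≥ 1`, `x ≥ 0` and bounded continuous `f`. -/
theorem stmt_16 (L T : ℕ → (ℝ → ℝ) → ℝ → ℝ)
    (h : ∀ m : ℕ, 1 ≤ m → ∀ x : ℝ, 0 ≤ x → ∀ f : ℝ → ℝ,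
      ContinuousOn f (Set.Ici 0) → (∃ M : ℝ, ∀ t ∈ Set.Ici (0 : ℝ), |f t| ≤ M) →
      Tendsto (fun n : ℕ => L (m * n) (fun t => f (n * t)) (x / n)) atTop
        (𝓝 (T m f x))) :
    ∀ m ν : ℕ, 1 ≤ m → 1 ≤ ν → ∀ x : ℝ, 0 ≤ x → ∀ f : ℝ → ℝ,
      ContinuousOn f (Set.Ici 0) → (∃ M : ℝ, ∀ t ∈ Set.Ici (0 : ℝ), |f t| ≤ M) →
      T (m * ν) (fun t => f (ν * t)) (x / ν) = T m f x := by
  intro m ν hm hν x hx f hf hb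
  have hν₀ : (0 : ℝ) ≤ ν := ν.cast_nonneg
  -- Along the subsequence `n = ν k`, the defining limit of `T m f x` is the one of
  -- `T (m ν) (f (ν ·)) (x / ν)`.
  have hsub : Tendsto (fun k : ℕ => L (m * (ν * k)) (fun t => f ((ν * k : ℕ) * t))
      (x / (ν * k : ℕ))) atTop (𝓝 (T m f x)) :=
    (h m hm x hx f hf hb).comp (tendsto_id.const_mul_atTop' hν)
  have hscaled := h (m * ν) (one_le_mul hm hν) (x / ν) (div_nonneg hx hν₀) _
    (hf.comp_const_mul_Ici hν₀) (exists_abs_comp_const_mul_le_of_Ici hν₀ hb)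
  refine tendsto_nhds_unique (hscaled.congr fun k => ?_) hsub
  simp only [Nat.cast_mul, mul_assoc, div_div]
end

section
/- Let 0 ≤ a_0 < a_1 < a_2 < ⋯ be a strictly increasing sequence of nonnegative reals, and for each m ∈ ℕ, m ≥ 1, and k ∈ ℕ let φ_{m,k} : [0,∞) → [0,∞) be nonnegative, bounded and continuous, with Σ_{k=0}^{∞} φ_{m,k}(x) < ∞ for every x ≥ 0. Define T_m(f;x) := Σ_{k=0}^{∞} φ_{m,k}(x) f(a_k/m) for bounded continuous f : [0,∞) → ℝ and x ≥ 0. Then the following three conditions are equivalent: (i) T_{mν}( f(νt); x/ν ) = T_m( f(t); x ) for all m, ν ∈ ℕ with m, ν ≥ 1, all x ≥ 0, and all bounded continuous f; (ii) φ_{mν,k}(x) = φ_{m,k}(νx) for all m, ν ∈ ℕ with m, ν ≥ 1, all k ∈ ℕ, and all x ≥ 0; (iii) φ_{m,k}(x) = φ_{1,k}(mx) for all m ∈ ℕ with m ≥ 1, all k ∈ ℕ, and all x ≥ 0. -/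
/-!
(iii) ⇒ (i) holds term by term. For (i) ⇒ (ii), strictly increasing nodes are isolated, so there
is a bounded continuous `g` with `g (a j) = 1` for `j = k` and `0` otherwise; testing (i) at the
point `ν x` against `t ↦ g (m t)` collapses both series to their `k`-th coefficients.
-/

-- `δ` is the least of the first `k + 1` consecutive gaps.
lemma StrictMono.exists_pos_le_abs_sub {a : ℕ → ℝ} (ha : StrictMono a) (k : ℕ) :
    ∃ δ > 0, ∀ j ≠ k, δ ≤ |a j - a k| := by
  set gap := fun i => a (i + 1) - a i
  have hne : (Finset.range (k + 1)).Nonempty := Finset.nonempty_range_add_one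
  refine ⟨(Finset.range (k + 1)).inf' hne gap,
    (Finset.lt_inf'_iff hne).2 fun i _ => sub_pos.2 (ha i.lt_succ_self), fun j hj => ?_⟩
  rcases hj.lt_or_gt with hjk | hkj
  · have hgap := Finset.inf'_le gap (Finset.mem_range.2 (hjk.trans k.lt_succ_self))
    have hstep : a (j + 1) ≤ a k := ha.monotone hjk
    rw [abs_sub_comm, abs_of_pos (sub_pos.2 (ha hjk))]
    exact hgap.trans (by simp only [gap]; linarith)
  · have hgap := Finset.inf'_le gap (Finset.mem_range.2 k.lt_succ_self)
    have hstep : a (k + 1) ≤ a j := ha.monotone hkj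
    rw [abs_of_pos (sub_pos.2 (ha hkj))]
    exact hgap.trans (by simp only [gap]; linarith)

lemma StrictMono.exists_continuous_eq_ite {a : ℕ → ℝ} (ha : StrictMono a) (k : ℕ) :
    ∃ g : ℝ → ℝ, Continuous g ∧ (∀ t, |g t| ≤ 1) ∧
      ∀ j, g (a j) = if j = k then 1 else 0 := by
  obtain ⟨δ, hδ, hsep⟩ := ha.exists_pos_le_abs_sub k
  refine ⟨fun t => max 0 (1 - |t - a k| / δ), by fun_prop, fun t => ?_, fun j => ?_⟩
  · have : 0 ≤ |t - a k| / δ := by positivity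
    rw [abs_of_nonneg (le_max_left _ _)]
    exact max_le zero_le_one (by linarith)
  · split_ifs with hj
    · simp [hj]
    · have : 1 ≤ |a j - a k| / δ := (one_le_div hδ).2 (hsep j hj)
      exact max_eq_left (by linarith)

theorem stmt_17_general (a : ℕ → ℝ) (hmono : StrictMono a)
    (φ : ℕ → ℕ → ℝ → ℝ) :
    List.TFAE
      [∀ m ν : ℕ, 1 ≤ m → 1 ≤ ν → ∀ x : ℝ, 0 ≤ x → ∀ f : ℝ → ℝ,
          ContinuousOn f (Set.Ici 0) → (∃ M : ℝ, ∀ t ∈ Set.Ici (0 : ℝ), |f t| ≤ M) →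
          ∑' k : ℕ, φ (m * ν) k (x / ν) * f (ν * (a k / (m * ν))) =
            ∑' k : ℕ, φ m k x * f (a k / m),
        ∀ m ν : ℕ, 1 ≤ m → 1 ≤ ν → ∀ k : ℕ, ∀ x : ℝ, 0 ≤ x →
          φ (m * ν) k x = φ m k (ν * x),
        ∀ m : ℕ, 1 ≤ m → ∀ k : ℕ, ∀ x : ℝ, 0 ≤ x →
          φ m k x = φ 1 k (m * x)] := by
  have hnode : ∀ m ν : ℕ, 1 ≤ m → 1 ≤ ν → ∀ k, (ν : ℝ) * (a k / (m * ν)) = a k / m := by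
    intro m ν hm hν k
    have : (ν : ℝ) ≠ 0 := by positivity
    field_simp
  tfae_have 1 → 2 := by
    intro h1 m ν hm hν k x hx
    obtain ⟨g, hgc, hg1, hgk⟩ := hmono.exists_continuous_eq_ite k
    have key := h1 m ν hm hν (ν * x) (by positivity) (fun t => g (m * t))
      (by fun_prop : Continuous fun t => g (m * t)).continuousOn
      ⟨1, fun t _ => hg1 _⟩
    have hm0 : (m : ℝ) ≠ 0 := by positivity
    have hν0 : (ν : ℝ) ≠ 0 := by positivity
    simpa [hnode m ν hm hν, mul_div_cancel₀ _ hm0, mul_div_cancel_left₀ _ hν0, hgk, mul_ite]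
      using key
  tfae_have 2 → 3 := fun h2 m hm k x hx => by simpa using h2 1 m le_rfl hm k x hx
  tfae_have 3 → 1 := by
    intro h3 m ν hm hν x hx f _ _
    refine tsum_congr fun k => ?_
    have hν0 : (ν : ℝ) ≠ 0 := by positivity
    rw [hnode m ν hm hν, h3 (m * ν) (Nat.one_le_iff_ne_zero.2 (by positivity)) k _ (by positivity),
      h3 m hm k x hx]
    push_cast
    field_simp
  tfae_finish

/-- **Characterization of discrete limit operators.** For
`T_m(f; x) = ∑_k φ_{m,k}(x) f(a_k/m)` with nonnegative, bounded, continuous, summable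
coefficient functions `φ_{m,k}` and strictly increasing nonnegative nodes `a_k`, the
functional equation `T_{mν}(f(νt); x/ν) = T_m(f(t); x)` is equivalent to
`φ_{mν,k}(x) = φ_{m,k}(νx)` and to `φ_{m,k}(x) = φ_{1,k}(mx)`. -/
theorem stmt_17 (a : ℕ → ℝ) (ha0 : 0 ≤ a 0) (hmono : StrictMono a)
    (φ : ℕ → ℕ → ℝ → ℝ)
    (hcont : ∀ m : ℕ, 1 ≤ m → ∀ k : ℕ, ContinuousOn (φ m k) (Set.Ici 0))
    (hnonneg : ∀ m : ℕ, 1 ≤ m → ∀ k : ℕ, ∀ x ∈ Set.Ici (0 : ℝ), 0 ≤ φ m k x)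
    (hbdd : ∀ m : ℕ, 1 ≤ m → ∀ k : ℕ, ∃ M : ℝ, ∀ x ∈ Set.Ici (0 : ℝ), φ m k x ≤ M)
    (hsum : ∀ m : ℕ, 1 ≤ m → ∀ x : ℝ, 0 ≤ x → Summable (fun k => φ m k x)) :
    List.TFAE
      [∀ m ν : ℕ, 1 ≤ m → 1 ≤ ν → ∀ x : ℝ, 0 ≤ x → ∀ f : ℝ → ℝ,
          ContinuousOn f (Set.Ici 0) → (∃ M : ℝ, ∀ t ∈ Set.Ici (0 : ℝ), |f t| ≤ M) →
          ∑' k : ℕ, φ (m * ν) k (x / ν) * f (ν * (a k / (m * ν))) =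
            ∑' k : ℕ, φ m k x * f (a k / m),
        ∀ m ν : ℕ, 1 ≤ m → 1 ≤ ν → ∀ k : ℕ, ∀ x : ℝ, 0 ≤ x →
          φ (m * ν) k x = φ m k (ν * x),
        ∀ m : ℕ, 1 ≤ m → ∀ k : ℕ, ∀ x : ℝ, 0 ≤ x →
          φ m k x = φ 1 k (m * x)] :=
  stmt_17_general a hmono φ
end

section
/- Let K : [0,∞) × [0,∞) → [0,∞) be continuous and such that for each x ≥ 0 the function t ↦ K(t,x) is Lebesgue integrable on [0,∞), and define Z(f)(x) := ∫_0^∞ f(t) K(t,x) dt for bounded continuous f : [0,∞) → ℝ. Then the following are equivalent: (i) for every ν ∈ ℕ with ν ≥ 1, every x ≥ 0, and every bounded continuous f : [0,∞) → ℝ, Z( t ↦ f(t/ν) )(νx) = Z(f)(x); (ii) for every real ν > 0 and all t, x ≥ 0, K(νt, νx) = (1/ν) K(t,x). -/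
open MeasureTheory Set

/-!
The substitution `t = ν s` turns (i) into `∫ f(s) (ν K(νs, νx) - K(s, x)) ds = 0` for all
bounded continuous `f`. Testing against `g / (1 + |g|)` shows that a continuous integrable `g`
orthogonal to all such `f` vanishes, so `ν K(νt, νx) = K(t, x)` for integers `ν ≥ 1`. Scales
with this property form a multiplicative group, hence contain the positive rationals, and
continuity of `K` extends the identity to all real `ν > 0`. The converse is the same
substitution read backwards.
-/

theorem eqOn_zero_of_forall_setIntegral_mul_eq_zero {X : Type*} [TopologicalSpace X]
    [MeasurableSpace X] {μ : Measure X} [μ.IsOpenPosMeasure] {s : Set X}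
    (hs : s ⊆ closure (interior s)) {g : X → ℝ} (hgc : ContinuousOn g s)
    (hgi : IntegrableOn g s μ)
    (h : ∀ f : X → ℝ, ContinuousOn f s → (∃ M : ℝ, ∀ t ∈ s, |f t| ≤ M) →
      ∫ t in s, f t * g t ∂μ = 0) :
    EqOn g 0 s := by
  set φ : ℝ → ℝ := fun y => y / (1 + |y|) with hφ
  have hφc : Continuous φ :=
    continuous_id.div (continuous_const.add continuous_abs) fun y => by positivity
  have hφb : ∀ y, |φ y| ≤ 1 := fun y => by
    rw [hφ, abs_div, abs_of_pos (by positivity : 0 < 1 + |y|), div_le_one (by positivity)]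
    linarith
  have hφg : ∀ y, φ y * y = y * y / (1 + |y|) := fun y => div_mul_eq_mul_div _ _ _
  have hint : IntegrableOn (fun t => φ (g t) * g t) s μ :=
    hgi.bdd_mul (hφc.comp_aestronglyMeasurable hgi.aestronglyMeasurable)
      (ae_of_all _ fun t => hφb (g t))
  have hzero : ∫ t in s, φ (g t) * g t ∂μ = 0 :=
    h _ (hφc.comp_continuousOn hgc) ⟨1, fun t _ => hφb (g t)⟩
  have hae : (fun t => φ (g t) * g t) =ᵐ[μ.restrict s] 0 :=
    (integral_eq_zero_iff_of_nonneg_ae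
      (ae_of_all _ fun t => by
        simp only [Pi.zero_apply, hφg]; exact div_nonneg (mul_self_nonneg _) (by positivity))
      hint).1 hzero
  intro t ht
  have ht0 := Measure.eqOn_of_ae_eq hae ((hφc.comp_continuousOn hgc).mul hgc)
    continuousOn_const hs ht
  simp only [Pi.zero_apply, hφg, div_eq_zero_iff, mul_self_eq_zero] at ht0 ⊢
  exact ht0.resolve_right (by positivity)

theorem MeasureTheory.IntegrableOn.bdd_mul_of_continuousOn {X : Type*} [TopologicalSpace X]
    [MeasurableSpace X] [OpensMeasurableSpace X] {μ : Measure X} {s : Set X}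
    (hs : MeasurableSet s) {f g : X → ℝ} (hg : IntegrableOn g s μ) (hf : ContinuousOn f s)
    {M : ℝ} (hM : ∀ t ∈ s, |f t| ≤ M) :
    IntegrableOn (fun t => f t * g t) s μ :=
  hg.bdd_mul (hf.aestronglyMeasurable hs) ((ae_restrict_iff' hs).2 (ae_of_all _ hM))

theorem MeasureTheory.IntegrableOn.comp_mul_left_Ici {E : Type*} [NormedAddCommGroup E]
    {g : ℝ → E} (hg : IntegrableOn g (Ici 0)) {c : ℝ} (hc : 0 < c) :
    IntegrableOn (fun s => g (c * s)) (Ici 0) := by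
  rw [integrableOn_Ici_iff_integrableOn_Ioi] at hg ⊢
  exact (integrableOn_Ioi_comp_mul_left_iff g 0 hc).2 (by rwa [mul_zero])

theorem setIntegral_Ici_comp_div_mul (f : ℝ → ℝ) (K : ℝ → ℝ → ℝ) {c : ℝ}
    (hc : 0 < c) (x : ℝ) :
    ∫ t in Ici (0 : ℝ), f (t / c) * K t (c * x) =
      ∫ s in Ici (0 : ℝ), f s * (c * K (c * s) (c * x)) := by
  have hsub : ∫ s in Ioi (0 : ℝ), f (c * s / c) * K (c * s) (c * x) =
      c⁻¹ * ∫ t in Ioi (0 : ℝ), f (t / c) * K t (c * x) := by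
    rw [integral_comp_mul_left_Ioi (fun t => f (t / c) * K t (c * x)) 0 hc, mul_zero,
      smul_eq_mul]
  simp only [mul_div_cancel_left₀ _ hc.ne'] at hsub
  rw [integral_Ici_eq_integral_Ioi, integral_Ici_eq_integral_Ioi]
  simp_rw [mul_left_comm _ c, integral_const_mul, hsub, mul_inv_cancel_left₀ hc.ne']

section Kernel

variable {K : ℝ → ℝ → ℝ}

def HomogeneousAt (K : ℝ → ℝ → ℝ) (c : ℝ) : Prop :=
  ∀ t, 0 ≤ t → ∀ x, 0 ≤ x → c * K (c * t) (c * x) = K t x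

theorem HomogeneousAt.mul {a b : ℝ} (ha : HomogeneousAt K a) (hb : HomogeneousAt K b)
    (hb0 : 0 ≤ b) : HomogeneousAt K (a * b) := by
  intro t ht x hx
  calc a * b * K (a * b * t) (a * b * x)
      = b * (a * K (a * (b * t)) (a * (b * x))) := by simp only [mul_assoc, mul_left_comm]
    _ = K t x := by rw [ha _ (mul_nonneg hb0 ht) _ (mul_nonneg hb0 hx), hb t ht x hx]

theorem HomogeneousAt.inv {a : ℝ} (ha : HomogeneousAt K a) (ha0 : 0 < a) :
    HomogeneousAt K a⁻¹ := by
  intro t ht x hx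
  have h := ha (a⁻¹ * t) (by positivity) (a⁻¹ * x) (by positivity)
  rw [mul_inv_cancel_left₀ ha0.ne', mul_inv_cancel_left₀ ha0.ne'] at h
  rw [← h, inv_mul_cancel_left₀ ha0.ne']

theorem homogeneousAt_ratCast (hK : ∀ n : ℕ, 1 ≤ n → HomogeneousAt K n) {q : ℚ}
    (hq : 0 < q) : HomogeneousAt K q := by
  have hnum : 0 < q.num := Rat.num_pos.2 hq
  have hq' : (q : ℝ) = (q.num.natAbs : ℝ) * (q.den : ℝ)⁻¹ := by
    rw [Rat.cast_def, div_eq_mul_inv, Nat.cast_natAbs, abs_of_pos (by exact_mod_cast hnum)]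
  rw [hq']
  exact (hK _ (Int.natAbs_pos.2 hnum.ne')).mul ((hK _ q.den_pos).inv (by positivity))
    (by positivity)

theorem continuousOn_kernel_comp
    (hKc : ContinuousOn (fun p : ℝ × ℝ => K p.1 p.2) (Ici 0 ×ˢ Ici 0)) {u v : ℝ → ℝ}
    (hu : Continuous u) (hv : Continuous v) {S : Set ℝ}
    (hS : ∀ s ∈ S, 0 ≤ u s ∧ 0 ≤ v s) :
    ContinuousOn (fun s => K (u s) (v s)) S :=
  hKc.comp (hu.prodMk hv).continuousOn fun s hs => hS s hs

theorem homogeneousAt_of_pos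
    (hKc : ContinuousOn (fun p : ℝ × ℝ => K p.1 p.2) (Ici 0 ×ˢ Ici 0))
    (hK : ∀ q : ℚ, 0 < q → HomogeneousAt K q) {c : ℝ} (hc : 0 < c) : HomogeneousAt K c := by
  intro t ht x hx
  have hφc : ContinuousOn (fun c : ℝ => c * K (c * t) (c * x)) (Ioi 0) :=
    continuousOn_id.mul (continuousOn_kernel_comp hKc (continuous_mul_const t)
      (continuous_mul_const x) fun c hc => ⟨mul_nonneg (le_of_lt hc) ht,
        mul_nonneg (le_of_lt hc) hx⟩)
  have hrat : EqOn (fun c : ℝ => c * K (c * t) (c * x)) (fun _ => K t x)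
      (Ioi 0 ∩ range ((↑) : ℚ → ℝ)) := by
    rintro _ ⟨hpos, q, rfl⟩
    exact hK q (Rat.cast_pos.1 (mem_Ioi.1 hpos)) t ht x hx
  exact hrat.of_subset_closure hφc continuousOn_const inter_subset_left
    (Rat.denseRange_cast.open_subset_closure_inter isOpen_Ioi) hc

theorem homogeneousAt_of_integral_comp_div_eq
    (hKc : ContinuousOn (fun p : ℝ × ℝ => K p.1 p.2) (Ici 0 ×ˢ Ici 0))
    (hKint : ∀ x : ℝ, 0 ≤ x → IntegrableOn (fun t => K t x) (Ici 0)) {c : ℝ} (hc : 0 < c)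
    (H : ∀ x : ℝ, 0 ≤ x → ∀ f : ℝ → ℝ,
        ContinuousOn f (Ici 0) → (∃ M : ℝ, ∀ t ∈ Ici (0 : ℝ), |f t| ≤ M) →
        ∫ t in Ici (0 : ℝ), f (t / c) * K t (c * x) = ∫ t in Ici (0 : ℝ), f t * K t x) :
    HomogeneousAt K c := by
  intro t ht x hx
  have hcx : 0 ≤ c * x := mul_nonneg hc.le hx
  have hscaled : IntegrableOn (fun s => c * K (c * s) (c * x)) (Ici 0) :=
    ((hKint _ hcx).comp_mul_left_Ici hc).const_mul c
  have hdiff : ∀ f : ℝ → ℝ, ContinuousOn f (Ici 0) →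
      (∃ M : ℝ, ∀ t ∈ Ici (0 : ℝ), |f t| ≤ M) →
      ∫ s in Ici (0 : ℝ), f s * (c * K (c * s) (c * x) - K s x) = 0 := by
    rintro f hfc ⟨M, hM⟩
    simp_rw [mul_sub]
    rw [integral_sub (hscaled.bdd_mul_of_continuousOn measurableSet_Ici hfc hM)
      ((hKint x hx).bdd_mul_of_continuousOn measurableSet_Ici hfc hM),
      ← setIntegral_Ici_comp_div_mul f K hc x, H x hx f hfc ⟨M, hM⟩, sub_self]
  have hgc : ContinuousOn (fun s => c * K (c * s) (c * x) - K s x) (Ici 0) :=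
    (continuousOn_const.mul (continuousOn_kernel_comp hKc (continuous_const_mul c)
      continuous_const fun s hs => ⟨mul_nonneg hc.le hs, hcx⟩)).sub
      (continuousOn_kernel_comp hKc continuous_id continuous_const fun s hs => ⟨hs, hx⟩)
  have h0 := eqOn_zero_of_forall_setIntegral_mul_eq_zero (μ := volume)
    (by rw [interior_Ici, closure_Ioi]) hgc (hscaled.sub (hKint x hx)) hdiff ht
  exact sub_eq_zero.1 h0

end Kernel

theorem stmt_18_general (K : ℝ → ℝ → ℝ)
    (hKc : ContinuousOn (fun p : ℝ × ℝ => K p.1 p.2) (Set.Ici 0 ×ˢ Set.Ici 0))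
    (hKint : ∀ x : ℝ, 0 ≤ x → IntegrableOn (fun t => K t x) (Set.Ici 0)) :
    (∀ ν : ℕ, 1 ≤ ν → ∀ x : ℝ, 0 ≤ x → ∀ f : ℝ → ℝ,
        ContinuousOn f (Set.Ici 0) → (∃ M : ℝ, ∀ t ∈ Set.Ici (0 : ℝ), |f t| ≤ M) →
        ∫ t in Set.Ici (0 : ℝ), f (t / ν) * K t (ν * x) =
          ∫ t in Set.Ici (0 : ℝ), f t * K t x) ↔
      (∀ ν : ℝ, 0 < ν → ∀ t : ℝ, 0 ≤ t → ∀ x : ℝ, 0 ≤ x →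
        K (ν * t) (ν * x) = (1 / ν) * K t x) := by
  constructor
  · intro H ν hν t ht x hx
    have hnat (n : ℕ) (hn : 1 ≤ n) : HomogeneousAt K n :=
      homogeneousAt_of_integral_comp_div_eq hKc hKint (by exact_mod_cast hn) (H n hn)
    have hscale := homogeneousAt_of_pos hKc (fun q hq => homogeneousAt_ratCast hnat hq) hν
      t ht x hx
    rw [← hscale, one_div, inv_mul_cancel_left₀ hν.ne']
  · intro hom ν hν x hx f _ _
    have hν' : (0 : ℝ) < ν := by exact_mod_cast hν
    rw [setIntegral_Ici_comp_div_mul f K hν' x]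
    refine setIntegral_congr_fun measurableSet_Ici fun s hs => ?_
    rw [hom ν hν' s hs x hx, one_div, mul_inv_cancel_left₀ hν'.ne']

/-- **Characterization of integral limit operators via kernel homogeneity.** For an
integral operator `Z(f)(x) = ∫_0^∞ f(t) K(t,x) dt` with continuous nonnegative integrable
kernel, the functional equation `Z(f(t/ν); νx) = Z(f(t); x)` (for all `ν ∈ ℕ, ν ≥ 1`,
`x ≥ 0` and bounded continuous `f`) holds iff `K(νt, νx) = (1/ν) K(t,x)` for all real
`ν > 0` and `t, x ≥ 0`. -/
theorem stmt_18 (K : ℝ → ℝ → ℝ)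
    (hKc : ContinuousOn (fun p : ℝ × ℝ => K p.1 p.2) (Set.Ici 0 ×ˢ Set.Ici 0))
    (hKnn : ∀ t ∈ Set.Ici (0 : ℝ), ∀ x ∈ Set.Ici (0 : ℝ), 0 ≤ K t x)
    (hKint : ∀ x : ℝ, 0 ≤ x → IntegrableOn (fun t => K t x) (Set.Ici 0)) :
    (∀ ν : ℕ, 1 ≤ ν → ∀ x : ℝ, 0 ≤ x → ∀ f : ℝ → ℝ,
        ContinuousOn f (Set.Ici 0) → (∃ M : ℝ, ∀ t ∈ Set.Ici (0 : ℝ), |f t| ≤ M) →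
        ∫ t in Set.Ici (0 : ℝ), f (t / ν) * K t (ν * x) =
          ∫ t in Set.Ici (0 : ℝ), f t * K t x) ↔
      (∀ ν : ℝ, 0 < ν → ∀ t : ℝ, 0 ≤ t → ∀ x : ℝ, 0 ≤ x →
        K (ν * t) (ν * x) = (1 / ν) * K t x) :=
  stmt_18_general K hKc hKint
end
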